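/- arXiv:math/0204312 — 6 statements merged into one kernel-verified Lean document; each statement's English description precedes it below -/
import Mathlib

section
/- Let m, n ≥ 1 be integers and let f : ℝ → ℝ be a measurable nonnegative function such that ∫ f(tr(B B†)) · |det B|^(2n) dB < ∞, the integral being over all complex m×m matrices B with Lebesgue measure. Then for every Hermitian positive definite m×m complex matrix S, ∫ f(tr(B S B†)) · |det B|^(2n) dB = (det S)^(−(m+n)) · ∫ f(tr(B B†)) · |det B|^(2n) dB. -/
open MeasureTheory Matrix
open scoped ENNReal Real ComplexOrder

noncomputable def rmulLin (m : ℕ) (T : Matrix (Fin m) (Fin m) ℂ) :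
    (Fin m → Fin m → ℂ) →ₗ[ℝ] (Fin m → Fin m → ℂ) where
  toFun B := Matrix.of B * T
  map_add' B C := by
    show (Matrix.of B + Matrix.of C) * T = Matrix.of B * T + Matrix.of C * T
    rw [Matrix.add_mul]
  map_smul' r B := by
    show (r • Matrix.of B) * T = r • (Matrix.of B * T)
    rw [Matrix.smul_mul]

theorem rmulLin_comp (m : ℕ) (T₁ T₂ : Matrix (Fin m) (Fin m) ℂ) :
    rmulLin m T₁ ∘ₗ rmulLin m T₂ = rmulLin m (T₂ * T₁) := by
  apply LinearMap.ext
  intro B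
  show (Matrix.of B * T₂) * T₁ = Matrix.of B * (T₂ * T₁)
  rw [Matrix.mul_assoc]

theorem rmulLin_one (m : ℕ) : rmulLin m 1 = LinearMap.id := by
  apply LinearMap.ext
  intro B
  show (Matrix.of B * 1 : Matrix (Fin m) (Fin m) ℂ) = Matrix.of B
  rw [Matrix.mul_one]

theorem det_eq_prod_of_basis {ι M : Type*} [Fintype ι] [DecidableEq ι] [AddCommGroup M]
    [Module ℝ M] (b : Module.Basis ι ℝ M) (L : M →ₗ[ℝ] M) (c : ι → ℝ)
    (h : ∀ v, L (b v) = c v • b v) : LinearMap.det L = ∏ v, c v := by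
  rw [← LinearMap.det_toMatrix b]
  have hb : LinearMap.toMatrix b b L = Matrix.diagonal c := by
    ext x y
    rw [LinearMap.toMatrix_apply, h y, _root_.map_smul]
    simp only [Module.Basis.repr_self, Finsupp.smul_single, smul_eq_mul, mul_one, Finsupp.single_apply, Matrix.diagonal_apply]
    rcases eq_or_ne x y with hxy | hxy
    · simp [hxy]
    · simp [hxy, Ne.symm hxy]
  rw [hb, Matrix.det_diagonal]

theorem rmulLin_diagonal_det (m : ℕ) (d : Fin m → ℝ) :
    LinearMap.det (rmulLin m (Matrix.diagonal (fun j => (d j : ℂ)))) = (∏ j, d j) ^ (2 * m) := by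
  classical
  set b := Pi.basis (fun _ : Fin m => Pi.basis (fun _ : Fin m => Complex.basisOneI)) with hbdef
  have h : ∀ v : Σ _ : Fin m, Σ _ : Fin m, Fin 2,
      rmulLin m (Matrix.diagonal (fun j => (d j : ℂ))) (b v) = d v.2.1 • b v := by
    rintro ⟨i, j, k⟩
    funext a c
    show (Matrix.of (b ⟨i, ⟨j, k⟩⟩) * Matrix.diagonal (fun j => (d j : ℂ))) a c
        = (d j • b ⟨i, ⟨j, k⟩⟩) a c
    rw [Matrix.mul_diagonal]
    have hb1 : b ⟨i, ⟨j, k⟩⟩ = Pi.single i (Pi.single j (Complex.basisOneI k)) := by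
      rw [hbdef, Pi.basis_apply, Pi.basis_apply]
    rw [hb1]
    rcases eq_or_ne a i with hai | hai
    · rcases eq_or_ne c j with hcj | hcj
      · subst hai; subst hcj
        simp [mul_comm, Complex.real_smul]
      · subst hai
        simp [Pi.single_apply, hcj]
    · simp [Pi.single_apply, hai]
  rw [det_eq_prod_of_basis b _ _ h]
  have h2 : (∏ w : (_ : Fin m) × Fin 2, d w.1) = (∏ j, d j) ^ 2 := by
    rw [← Finset.univ_sigma_univ, Finset.prod_sigma]
    simp [sq, Finset.prod_mul_distrib]
  calc (∏ v : (_ : Fin m) × (_ : Fin m) × Fin 2, d v.snd.fst)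
      = ∏ _i : Fin m, ∏ w : (_ : Fin m) × Fin 2, d w.1 := by
        rw [← Finset.univ_sigma_univ, Finset.prod_sigma]
    _ = (∏ j, d j) ^ (2 * m) := by
        simp only [h2]
        rw [Finset.prod_const, Finset.card_univ, Fintype.card_fin, ← pow_mul, mul_comm 2 m]

/-- Complex rescaling identity: for `S` Hermitian positive definite,
`∫ f(tr B S B†)|det B|^{2n} dB = (det S)^(−(m+n)) ∫ f(tr B B†)|det B|^{2n} dB`. -/
theorem integral_scaling_complex (m n : ℕ) (hm : 1 ≤ m) (hn : 1 ≤ n)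
    (f : ℝ → ℝ) (hf_meas : Measurable f) (hf_nonneg : ∀ x, 0 ≤ f x)
    (hfin : (∫⁻ B : Fin m → Fin m → ℂ,
        ENNReal.ofReal (f (Matrix.trace (Matrix.of B * (Matrix.of B)ᴴ)).re *
          ‖Matrix.det (Matrix.of B)‖ ^ (2 * n))) ≠ ⊤)
    (S : Matrix (Fin m) (Fin m) ℂ) (hS : S.PosDef) :
    (∫⁻ B : Fin m → Fin m → ℂ,
        ENNReal.ofReal (f (Matrix.trace (Matrix.of B * S * (Matrix.of B)ᴴ)).re *
          ‖Matrix.det (Matrix.of B)‖ ^ (2 * n)))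
      = ENNReal.ofReal (S.det.re ^ (-((m : ℝ) + n))) *
        ∫⁻ B : Fin m → Fin m → ℂ,
          ENNReal.ofReal (f (Matrix.trace (Matrix.of B * (Matrix.of B)ᴴ)).re *
            ‖Matrix.det (Matrix.of B)‖ ^ (2 * n)) := by
  classical
  have hH : S.IsHermitian := hS.1
  set V : Matrix (Fin m) (Fin m) ℂ := (hH.eigenvectorUnitary : Matrix (Fin m) (Fin m) ℂ) with hV
  set lam : Fin m → ℝ := hH.eigenvalues with hlamdef
  have hlam : ∀ i, 0 < lam i := hS.eigenvalues_pos
  set Δ : Matrix (Fin m) (Fin m) ℂ :=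
    Matrix.diagonal (fun j => ((Real.sqrt (lam j) : ℝ) : ℂ)) with hΔdef
  set T : Matrix (Fin m) (Fin m) ℂ := V * Δ * star V with hT
  have hUV : V * star V = 1 := mem_unitaryGroup_iff.mp hH.eigenvectorUnitary.2
  have hVU : star V * V = 1 := mem_unitaryGroup_iff'.mp hH.eigenvectorUnitary.2
  have hΔΔ : Δ * Δ = Matrix.diagonal (fun j => ((lam j : ℝ) : ℂ)) := by
    rw [hΔdef, diagonal_mul_diagonal]
    refine congrArg Matrix.diagonal (funext fun j => ?_)
    rw [← Complex.ofReal_mul, Real.mul_self_sqrt (hlam j).le]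
  have hspec : S = V * Matrix.diagonal (fun j => ((lam j : ℝ) : ℂ)) * star V := by
    conv_lhs => rw [hH.spectral_theorem]
    rfl
  have hTH : Tᴴ = T := by
    rw [hT, conjTranspose_mul, conjTranspose_mul, star_eq_conjTranspose,
      conjTranspose_conjTranspose, diagonal_conjTranspose]
    have : star (fun j => ((Real.sqrt (lam j) : ℝ) : ℂ)) = fun j => ((Real.sqrt (lam j) : ℝ) : ℂ) := by
      funext j
      simp [Pi.star_apply, Complex.conj_ofReal]
    rw [this, ← star_eq_conjTranspose, Matrix.mul_assoc]
  have hTT : T * Tᴴ = S := by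
    rw [hTH, hT]
    calc (V * Δ * star V) * (V * Δ * star V)
        = V * (Δ * ((star V * V) * (Δ * star V))) := by
          simp only [Matrix.mul_assoc]
      _ = V * Matrix.diagonal (fun j => ((lam j : ℝ) : ℂ)) * star V := by
          rw [hVU, Matrix.one_mul, ← hΔΔ]
          simp only [Matrix.mul_assoc]
      _ = S := hspec.symm
  have hdetΔ : Δ.det = ((∏ j, Real.sqrt (lam j) : ℝ) : ℂ) := by
    rw [hΔdef, det_diagonal, Complex.ofReal_prod]
  have hdetT : T.det = ((∏ j, Real.sqrt (lam j) : ℝ) : ℂ) := by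
    rw [hT, det_mul, det_mul, mul_comm V.det Δ.det, mul_assoc, ← det_mul, hUV, det_one, mul_one,
      hdetΔ]
  set dS : ℝ := S.det.re with hdSdef
  have hdSeq : S.det = ((∏ j, lam j : ℝ) : ℂ) := by
    rw [hH.det_eq_prod_eigenvalues]
    norm_cast
  have hdSre : dS = ∏ j, lam j := by rw [hdSdef, hdSeq, Complex.ofReal_re]
  have hdSpos : 0 < dS := by
    rw [hdSre]
    exact Finset.prod_pos fun i _ => hlam i
  have habsT : ‖T.det‖ ^ 2 = dS := by
    rw [hdetT, Complex.norm_real, Real.norm_eq_abs,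
      abs_of_nonneg (Finset.prod_nonneg fun i _ => Real.sqrt_nonneg _), ← Finset.prod_pow, hdSre]
    exact Finset.prod_congr rfl fun i _ => Real.sq_sqrt (hlam i).le
  -- determinant of the real-linear map
  have hcomp : rmulLin m T = rmulLin m (star V) ∘ₗ rmulLin m Δ ∘ₗ rmulLin m V := by
    rw [rmulLin_comp, rmulLin_comp, hT]
  have hdetΔL : LinearMap.det (rmulLin m Δ) = (∏ j, Real.sqrt (lam j)) ^ (2 * m) :=
    rmulLin_diagonal_det m fun j => Real.sqrt (lam j)
  have hcancel : LinearMap.det (rmulLin m (star V)) * LinearMap.det (rmulLin m V) = 1 := by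
    rw [← LinearMap.det_comp, rmulLin_comp, hUV, rmulLin_one, LinearMap.det_id]
  have hdetL : LinearMap.det (rmulLin m T) = dS ^ m := by
    rw [hcomp, LinearMap.det_comp, LinearMap.det_comp, hdetΔL]
    have h2m : (∏ j, Real.sqrt (lam j)) ^ (2 * m) = dS ^ m := by
      rw [mul_comm 2 m, pow_mul, ← habsT, hdetT, Complex.norm_real, Real.norm_eq_abs,
        abs_of_nonneg (Finset.prod_nonneg fun i _ => Real.sqrt_nonneg _)]
      ring
    calc LinearMap.det (rmulLin m (star V)) *
          ((∏ j, Real.sqrt (lam j)) ^ (2 * m) * LinearMap.det (rmulLin m V))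
        = (∏ j, Real.sqrt (lam j)) ^ (2 * m) *
            (LinearMap.det (rmulLin m (star V)) * LinearMap.det (rmulLin m V)) := by ring
      _ = dS ^ m := by rw [hcancel, mul_one, h2m]
  -- measure theory
  haveI : (volume : Measure (Fin m → Fin m → ℂ)).IsAddHaarMeasure :=
    Measure.pi.isAddHaarMeasure _
  set g : (Fin m → Fin m → ℂ) → ℝ≥0∞ := fun C =>
    ENNReal.ofReal (f (Matrix.trace (Matrix.of C * (Matrix.of C)ᴴ)).re *
      ‖Matrix.det (Matrix.of C)‖ ^ (2 * n)) with hgdef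
  have hidc : Continuous fun C : Fin m → Fin m → ℂ => (Matrix.of C : Matrix (Fin m) (Fin m) ℂ) :=
    continuous_id
  have h1 : Continuous fun C : Fin m → Fin m → ℂ => (Matrix.of C * (Matrix.of C)ᴴ).trace :=
    (hidc.matrix_mul hidc.matrix_conjTranspose).matrix_trace
  have h2 : Continuous fun C : Fin m → Fin m → ℂ => ‖(Matrix.of C).det‖ :=
    continuous_norm.comp hidc.matrix_det
  have hg : Measurable g :=
    Measurable.ennreal_ofReal
      ((hf_meas.comp (Complex.continuous_re.comp h1).measurable).mul
        (h2.measurable.pow_const _))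
  have hLdet_ne : LinearMap.det (rmulLin m T) ≠ 0 := by
    rw [hdetL]; exact (pow_pos hdSpos m).ne'
  have hmeasL : Measurable (rmulLin m T) :=
    (LinearMap.continuous_of_finiteDimensional _).measurable
  have key : (∫⁻ B, g ((rmulLin m T) B)) = ENNReal.ofReal ((dS ^ m)⁻¹) * ∫⁻ B, g B := by
    rw [← lintegral_map hg hmeasL, Measure.map_linearMap_addHaar_eq_smul_addHaar volume hLdet_ne,
      lintegral_smul_measure, hdetL, abs_of_nonneg (inv_nonneg.mpr (pow_pos hdSpos m).le), smul_eq_mul]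
  have hpt : ∀ B : Fin m → Fin m → ℂ, g ((rmulLin m T) B) =
      ENNReal.ofReal (dS ^ n) *
        ENNReal.ofReal (f (Matrix.trace (Matrix.of B * S * (Matrix.of B)ᴴ)).re *
          ‖Matrix.det (Matrix.of B)‖ ^ (2 * n)) := by
    intro B
    have hofL : (Matrix.of ((rmulLin m T) B) : Matrix (Fin m) (Fin m) ℂ) = Matrix.of B * T := rfl
    have htr : (Matrix.of ((rmulLin m T) B) * (Matrix.of ((rmulLin m T) B))ᴴ).trace
        = (Matrix.of B * S * (Matrix.of B)ᴴ).trace := by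
      rw [hofL, conjTranspose_mul]
      rw [show Matrix.of B * T * (Tᴴ * (Matrix.of B)ᴴ) = Matrix.of B * (T * Tᴴ) * (Matrix.of B)ᴴ by
        simp only [Matrix.mul_assoc], hTT]
    have hdet : ‖Matrix.det (Matrix.of ((rmulLin m T) B))‖ ^ (2 * n)
        = ‖Matrix.det (Matrix.of B)‖ ^ (2 * n) * dS ^ n := by
      rw [hofL, det_mul, norm_mul, mul_pow]
      congr 1
      rw [mul_comm 2 n, pow_mul', habsT]
    rw [hgdef]
    simp only [htr, hdet]
    rw [show f (Matrix.trace (Matrix.of B * S * (Matrix.of B)ᴴ)).re *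
          (‖Matrix.det (Matrix.of B)‖ ^ (2 * n) * dS ^ n)
        = (f (Matrix.trace (Matrix.of B * S * (Matrix.of B)ᴴ)).re *
            ‖Matrix.det (Matrix.of B)‖ ^ (2 * n)) * dS ^ n by ring,
      ENNReal.ofReal_mul (mul_nonneg (hf_nonneg _) (pow_nonneg (norm_nonneg _) _)),
      mul_comm]
  have key2 : ENNReal.ofReal (dS ^ n) *
      (∫⁻ B : Fin m → Fin m → ℂ,
        ENNReal.ofReal (f (Matrix.trace (Matrix.of B * S * (Matrix.of B)ᴴ)).re *
          ‖Matrix.det (Matrix.of B)‖ ^ (2 * n)))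
      = ENNReal.ofReal ((dS ^ m)⁻¹) * ∫⁻ B, g B := by
    rw [← lintegral_const_mul' _ _ ENNReal.ofReal_ne_top, ← key]
    exact lintegral_congr fun B => (hpt B).symm
  have hc0 : ENNReal.ofReal (dS ^ n) ≠ 0 :=
    (ENNReal.ofReal_pos.mpr (pow_pos hdSpos n)).ne'
  have hrw : dS ^ (-((m : ℝ) + n)) = (dS ^ n)⁻¹ * (dS ^ m)⁻¹ := by
    have hcast : ((m : ℝ) + n) = ((m + n : ℕ) : ℝ) := by push_cast; ring
    rw [Real.rpow_neg hdSpos.le, hcast, Real.rpow_natCast, pow_add, mul_inv, mul_comm]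
  calc (∫⁻ B : Fin m → Fin m → ℂ,
        ENNReal.ofReal (f (Matrix.trace (Matrix.of B * S * (Matrix.of B)ᴴ)).re *
          ‖Matrix.det (Matrix.of B)‖ ^ (2 * n)))
      = (ENNReal.ofReal (dS ^ n))⁻¹ * (ENNReal.ofReal (dS ^ n) *
          (∫⁻ B : Fin m → Fin m → ℂ,
            ENNReal.ofReal (f (Matrix.trace (Matrix.of B * S * (Matrix.of B)ᴴ)).re *
              ‖Matrix.det (Matrix.of B)‖ ^ (2 * n)))) := by
        rw [← mul_assoc, ENNReal.inv_mul_cancel hc0 ENNReal.ofReal_ne_top, one_mul]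
    _ = (ENNReal.ofReal (dS ^ n))⁻¹ * (ENNReal.ofReal ((dS ^ m)⁻¹) * ∫⁻ B, g B) := by rw [key2]
    _ = ENNReal.ofReal (dS ^ (-((m : ℝ) + n))) * ∫⁻ B, g B := by
        rw [hrw, ENNReal.ofReal_mul (inv_nonneg.mpr (pow_pos hdSpos n).le), ← mul_assoc,
          ENNReal.ofReal_inv_of_pos (pow_pos hdSpos n)]
end

section
/- Let m, n ≥ 1 be integers and let f₁, f₂ : ℝ → ℝ be measurable nonnegative functions such that for each k = 1, 2 the measure on complex m×(m+n) matrices with density A ↦ f_k(tr(A A†)) with respect to Lebesgue measure is a probability measure. Then the integrals I_k = ∫ f_k(tr(B B†)) · |det B|^(2n) dB over all complex m×m matrices B are finite and equal: I₁ = I₂ < ∞. -/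
open MeasureTheory Matrix Set
open scoped ENNReal Real

section helpers

variable {E : Type*} [NormedAddCommGroup E] [NormedSpace ℝ E] [MeasurableSpace E]
  [BorelSpace E] [FiniteDimensional ℝ E] (μ : Measure E) [μ.IsAddHaarMeasure]

lemma aux_lintegral_scale (g : E → ℝ≥0∞) (hg : Measurable g) {r : ℝ} (hr : 0 < r) :
    ∫⁻ x, g x ∂μ = ENNReal.ofReal r ^ (Module.finrank ℝ E) * ∫⁻ x, g (r • x) ∂μ := by
  have h1 : ∫⁻ x, g (r • x) ∂μ = ∫⁻ x, g x ∂(Measure.map (r • ·) μ) := by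
    rw [lintegral_map hg (measurable_const_smul r)]
  rw [h1, Measure.map_addHaar_smul μ hr.ne', lintegral_smul_measure, smul_eq_mul, ← mul_assoc]
  have h2 : |((r : ℝ) ^ Module.finrank ℝ E)⁻¹| = (r ^ Module.finrank ℝ E)⁻¹ := by
    rw [abs_of_nonneg]; positivity
  rw [h2, ENNReal.ofReal_inv_of_pos (by positivity), ← ENNReal.ofReal_pow hr.le,
    ENNReal.mul_inv_cancel (by positivity)
      ENNReal.ofReal_ne_top, one_mul]


lemma aux_homog (w : E → ℝ≥0∞) (hw : Measurable w) (T : E → ℝ) (hT : Measurable T)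
    (q p : ℕ) (hpq : Module.finrank ℝ E + q = 2 * p) (hp : 0 < p)
    (hT_scale : ∀ (r : ℝ), 0 < r → ∀ x, T (r • x) = r ^ 2 * T x)
    (hw_scale : ∀ (r : ℝ), 0 < r → ∀ x, w (r • x) = ENNReal.ofReal r ^ q * w x)
    (h0 : ∫⁻ x in {x | T x ≤ 0}, w x ∂μ = 0) (t : ℝ) :
    ∫⁻ x in {x | T x ≤ t}, w x ∂μ
      = ENNReal.ofReal t ^ p * ∫⁻ x in {x | T x ≤ 1}, w x ∂μ := by
  rcases le_or_gt t 0 with ht | ht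
  · have hsub : {x | T x ≤ t} ⊆ {x | T x ≤ 0} := fun x hx => le_trans hx ht
    have hle : ∫⁻ x in {x | T x ≤ t}, w x ∂μ ≤ ∫⁻ x in {x | T x ≤ 0}, w x ∂μ :=
      lintegral_mono' (Measure.restrict_mono hsub le_rfl) le_rfl
    rw [h0] at hle
    have : ENNReal.ofReal t = 0 := by simpa using ht
    simp [le_antisymm hle (zero_le (a := _)), this, zero_pow hp.ne']
  · set r : ℝ := Real.sqrt t with hrdef
    have hr : 0 < r := Real.sqrt_pos.2 ht
    have hr2 : r ^ 2 = t := Real.sq_sqrt ht.le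
    have hmeas_t : MeasurableSet {x | T x ≤ t} := hT measurableSet_Iic
    have hmeas_1 : MeasurableSet {x | T x ≤ 1} := hT measurableSet_Iic
    rw [← lintegral_indicator hmeas_t]
    rw [aux_lintegral_scale μ _ (hw.indicator hmeas_t) hr]
    have key : ∀ x, ({x | T x ≤ t}).indicator w (r • x)
        = ENNReal.ofReal r ^ q * ({x | T x ≤ 1}).indicator w x := by
      intro x
      have hiff : T (r • x) ≤ t ↔ T x ≤ 1 := by
        rw [hT_scale r hr, hr2]
        constructor
        · intro h; nlinarith
        · intro h; nlinarith
      by_cases hx : T x ≤ 1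
      · simp [Set.indicator_apply, hiff, hx, hw_scale r hr]
      · simp [Set.indicator_apply, hiff, hx]
    simp_rw [key]
    rw [lintegral_const_mul _ (hw.indicator hmeas_1), lintegral_indicator hmeas_1, ← mul_assoc,
      ← pow_add, hpq]
    congr 1
    rw [pow_mul, ← ENNReal.ofReal_pow hr.le, hr2]

lemma aux_measure_eq (ν₁ ν₂ : Measure ℝ) (a₁ a₂ : ℝ≥0∞) (p : ℕ)
    (h₁ : ∀ t, ν₁ (Iic t) = a₁ * ENNReal.ofReal t ^ p)
    (h₂ : ∀ t, ν₂ (Iic t) = a₂ * ENNReal.ofReal t ^ p)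
    (ha₁ : a₁ ≠ ⊤) (ha₂0 : a₂ ≠ 0) (ha₂ : a₂ ≠ ⊤) : ν₁ = (a₁ / a₂) • ν₂ := by
  refine Measure.ext_of_generateFrom_of_iUnion (range Iic) (fun i : ℕ => Iic i)
    (BorelSpace.measurable_eq.trans (borel_eq_generateFrom_Iic ℝ)) isPiSystem_Iic
    ?_ (fun i => ⟨i, rfl⟩) ?_ ?_
  · exact eq_univ_of_forall fun x => mem_iUnion.2 ⟨⌈x⌉₊, Nat.le_ceil x⟩
  · intro i
    rw [h₁]
    exact ENNReal.mul_ne_top ha₁ (ENNReal.pow_ne_top ENNReal.ofReal_ne_top)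
  · rintro s ⟨t, rfl⟩
    rw [h₁, Measure.smul_apply, h₂, smul_eq_mul, ← mul_assoc,
      ENNReal.div_mul_cancel ha₂0 ha₂]

end helpers

section matrixfacts

variable {m k : ℕ}

/-- The squared Frobenius norm. -/
noncomputable def Tfun (m k : ℕ) (B : Fin m → Fin k → ℂ) : ℝ :=
  ∑ i, ∑ j, Complex.normSq (B i j)

lemma trace_re_eq (B : Fin m → Fin k → ℂ) :
    (Matrix.trace (Matrix.of B * (Matrix.of B)ᴴ)).re = Tfun m k B := by
  simp [Tfun, Matrix.trace, Matrix.mul_apply, Matrix.diag, Matrix.conjTranspose_apply,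
    Complex.mul_conj, Complex.re_sum]

lemma Tfun_cont : Continuous (Tfun m k) := by
  refine continuous_finset_sum _ fun i _ => continuous_finset_sum _ fun j _ => ?_
  exact Complex.continuous_normSq.comp ((continuous_apply j).comp (continuous_apply i))

lemma Tfun_nonneg (B : Fin m → Fin k → ℂ) : 0 ≤ Tfun m k B :=
  Finset.sum_nonneg fun _ _ => Finset.sum_nonneg fun _ _ => Complex.normSq_nonneg _

lemma Tfun_scale (r : ℝ) (B : Fin m → Fin k → ℂ) :
    Tfun m k (r • B) = r ^ 2 * Tfun m k B := by
  simp only [Tfun, Pi.smul_apply, Complex.real_smul, Complex.normSq_mul,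
    Complex.normSq_ofReal, Finset.mul_sum]
  ring_nf

lemma Tfun_zero_subset : {B : Fin m → Fin k → ℂ | Tfun m k B ≤ 0} ⊆ {0} := by
  intro B hB
  simp only [mem_setOf_eq] at hB
  have h : Tfun m k B = 0 := le_antisymm hB (Tfun_nonneg B)
  have h2 : ∀ i ∈ Finset.univ, ∀ j ∈ Finset.univ, Complex.normSq (B i j) = 0 := by
    have := (Finset.sum_eq_zero_iff_of_nonneg
      (fun i _ => Finset.sum_nonneg fun j _ => Complex.normSq_nonneg _)).1 h
    intro i hi j hj
    exact (Finset.sum_eq_zero_iff_of_nonneg (fun j _ => Complex.normSq_nonneg _)).1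
      (this i hi) j hj
  simp only [mem_singleton_iff]
  funext i j
  exact Complex.normSq_eq_zero.1 (h2 i (Finset.mem_univ i) j (Finset.mem_univ j))

lemma finrank_matrix_space : Module.finrank ℝ (Fin m → Fin k → ℂ) = 2 * (m * k) := by
  simp [Module.finrank_pi_fintype, Complex.finrank_real_complex]
  ring

lemma Tfun_entry_le {B : Fin m → Fin k → ℂ} (hB : Tfun m k B ≤ 1) (i : Fin m) (j : Fin k) :
    ‖B i j‖ ≤ 1 := by
  have h1 : Complex.normSq (B i j) ≤ Tfun m k B := by
    calc Complex.normSq (B i j) ≤ ∑ j', Complex.normSq (B i j') :=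
          Finset.single_le_sum (fun j' _ => Complex.normSq_nonneg _) (Finset.mem_univ j)
      _ ≤ Tfun m k B :=
          Finset.single_le_sum
            (fun i' _ => Finset.sum_nonneg fun j' _ => Complex.normSq_nonneg _)
            (Finset.mem_univ i)
  rw [Complex.norm_def]
  exact (Real.sqrt_le_one).2 (h1.trans hB)

lemma Tfun_le_subset_ball : {B : Fin m → Fin k → ℂ | Tfun m k B ≤ 1} ⊆
    Metric.closedBall 0 1 := by
  intro B hB
  rw [Metric.mem_closedBall, dist_zero_right]
  refine (pi_norm_le_iff_of_nonneg zero_le_one).2 fun i => ?_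
  refine (pi_norm_le_iff_of_nonneg zero_le_one).2 fun j => ?_
  exact Tfun_entry_le hB i j

end matrixfacts

section instances

instance volOpenPos (m k : ℕ) : (volume : Measure (Fin m → Fin k → ℂ)).IsOpenPosMeasure :=
  MeasureTheory.Measure.pi.isOpenPosMeasure _

instance volAddHaar (m k : ℕ) : (volume : Measure (Fin m → Fin k → ℂ)).IsAddHaarMeasure :=
  ⟨⟩

end instances

section detfacts

variable {m n : ℕ}

noncomputable def wdet (m n : ℕ) (B : Fin m → Fin m → ℂ) : ℝ≥0∞ :=
  ENNReal.ofReal (‖Matrix.det (Matrix.of B)‖ ^ (2 * n))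

lemma wdet_meas : Measurable (wdet m n) := by
  have hc : Continuous fun B : Fin m → Fin m → ℂ => ‖(Matrix.of B).det‖ :=
    continuous_norm.comp (Continuous.matrix_det (continuous_id))
  exact ENNReal.measurable_ofReal.comp (hc.pow _).measurable

lemma wdet_scale (r : ℝ) (hr : 0 < r) (B : Fin m → Fin m → ℂ) :
    wdet m n (r • B) = ENNReal.ofReal r ^ (2 * (m * n)) * wdet m n B := by
  have h1 : Matrix.of (r • B) = (r : ℂ) • Matrix.of B := by
    ext i j
    simp [Complex.real_smul]
  have h2 : ‖Matrix.det (Matrix.of (r • B))‖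
      = r ^ m * ‖Matrix.det (Matrix.of B)‖ := by
    rw [h1, Matrix.det_smul, norm_mul, norm_pow, Complex.norm_real, Real.norm_eq_abs, abs_of_pos hr,
      Fintype.card_fin]
  rw [wdet, wdet, h2, mul_pow, ← pow_mul, ENNReal.ofReal_mul (by positivity),
    ENNReal.ofReal_pow hr.le]
  congr 2
  ring

lemma wdet_bound {B : Fin m → Fin m → ℂ} (hB : Tfun m m B ≤ 1) :
    wdet m n B ≤ ENNReal.ofReal ((Fintype.card (Equiv.Perm (Fin m)) : ℝ) ^ (2 * n)) := by
  have hd : ‖Matrix.det (Matrix.of B)‖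
      ≤ (Fintype.card (Equiv.Perm (Fin m)) : ℝ) := by
    rw [Matrix.det_apply']
    refine le_trans (norm_sum_le _ _) ?_
    refine le_trans (Finset.sum_le_sum (g := fun _ => (1 : ℝ))
      (fun σ (_ : σ ∈ Finset.univ) => ?_)) (by simp)
    rw [norm_mul, norm_prod]
    have h1 : ‖(((Equiv.Perm.sign σ : ℤ) : ℂ))‖ = 1 := by
      rcases Int.units_eq_one_or (Equiv.Perm.sign σ) with hσ | hσ <;> simp [hσ]
    rw [h1, one_mul]
    exact Finset.prod_le_one (fun i _ => norm_nonneg _)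
      (fun i _ => Tfun_entry_le hB _ _)
  refine ENNReal.ofReal_le_ofReal ?_
  exact pow_le_pow_left₀ (norm_nonneg _) hd _

end detfacts

section key

lemma nontrivial_pi (m k : ℕ) (hm : 1 ≤ m) (hk : 1 ≤ k) :
    Nontrivial (Fin m → Fin k → ℂ) := by
  refine ⟨0, fun _ _ => 1, fun h => ?_⟩
  have := congrFun (congrFun h ⟨0, hm⟩) ⟨0, hk⟩
  exact zero_ne_one this

lemma key_lemma (m n : ℕ) (hm : 1 ≤ m) (hn : 1 ≤ n) :
    ∃ C : ℝ≥0∞, C ≠ ⊤ ∧ ∀ g : ℝ → ℝ≥0∞, Measurable g →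
      (∫⁻ B : Fin m → Fin m → ℂ, wdet m n B * g (Tfun m m B))
        = C * ∫⁻ A : Fin m → Fin (m + n) → ℂ, g (Tfun m (m + n) A) := by
  haveI ntE : Nontrivial (Fin m → Fin m → ℂ) := nontrivial_pi m m hm hm
  haveI ntF : Nontrivial (Fin m → Fin (m + n) → ℂ) := nontrivial_pi m (m + n) hm (by omega)
  have hp : 0 < m * (m + n) := Nat.mul_pos hm (by omega)
  haveI : (nhdsWithin (0 : Fin m → Fin m → ℂ) {(0 : Fin m → Fin m → ℂ)}ᶜ).NeBot :=
    inferInstance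
  haveI : (nhdsWithin (0 : Fin m → Fin (m + n) → ℂ)
      {(0 : Fin m → Fin (m + n) → ℂ)}ᶜ).NeBot := inferInstance
  haveI : NoAtoms (volume : Measure (Fin m → Fin m → ℂ)) :=
    MeasureTheory.Measure.IsAddHaarMeasure.nullSingletonClass _
  haveI : NoAtoms (volume : Measure (Fin m → Fin (m + n) → ℂ)) :=
    MeasureTheory.Measure.IsAddHaarMeasure.nullSingletonClass _
  have hTE : Measurable (Tfun m m) := Tfun_cont.measurable
  have hTF : Measurable (Tfun m (m + n)) := Tfun_cont.measurable
  set a₁ : ℝ≥0∞ := ∫⁻ B in {B : Fin m → Fin m → ℂ | Tfun m m B ≤ 1}, wdet m n B with ha₁def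
  set a₂ : ℝ≥0∞ := volume {A : Fin m → Fin (m + n) → ℂ | Tfun m (m + n) A ≤ 1} with ha₂def
  set ν₁ : Measure ℝ := (volume.withDensity (wdet m n)).map (Tfun m m) with hν₁def
  set ν₂ : Measure ℝ := (volume : Measure (Fin m → Fin (m + n) → ℂ)).map (Tfun m (m + n))
    with hν₂def
  have h0E : ∫⁻ x in {x : Fin m → Fin m → ℂ | Tfun m m x ≤ 0}, wdet m n x ∂volume = 0 :=
    setLIntegral_measure_zero _ _ (measure_mono_null Tfun_zero_subset (measure_singleton 0))
  have h0F : ∫⁻ x in {x : Fin m → Fin (m + n) → ℂ | Tfun m (m + n) x ≤ 0},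
      (1 : ℝ≥0∞) ∂volume = 0 :=
    setLIntegral_measure_zero _ _ (measure_mono_null Tfun_zero_subset (measure_singleton 0))
  have h₁ : ∀ t, ν₁ (Iic t) = a₁ * ENNReal.ofReal t ^ (m * (m + n)) := by
    intro t
    rw [hν₁def, Measure.map_apply hTE measurableSet_Iic,
      withDensity_apply _ (hTE measurableSet_Iic)]
    have hpre : Tfun m m ⁻¹' (Iic t) = {x | Tfun m m x ≤ t} := rfl
    rw [hpre, aux_homog volume (wdet m n) wdet_meas (Tfun m m) hTE (2 * (m * n)) (m * (m + n))
      (by rw [finrank_matrix_space]; ring) hp (fun r _ x => Tfun_scale r x)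
      (fun r hr x => wdet_scale r hr x) h0E t, mul_comm]
  have h₂ : ∀ t, ν₂ (Iic t) = a₂ * ENNReal.ofReal t ^ (m * (m + n)) := by
    intro t
    rw [hν₂def, Measure.map_apply hTF measurableSet_Iic]
    have hpre : Tfun m (m + n) ⁻¹' (Iic t) = {x | Tfun m (m + n) x ≤ t} := rfl
    rw [hpre, ← setLIntegral_one, aux_homog volume (fun _ => (1 : ℝ≥0∞)) measurable_const
      (Tfun m (m + n)) hTF 0 (m * (m + n))
      (by rw [finrank_matrix_space]; ring) hp (fun r _ x => Tfun_scale r x)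
      (fun r hr x => by simp) h0F t, mul_comm, setLIntegral_one]
  have ha₁ : a₁ ≠ ⊤ := by
    have hb : a₁ ≤ ENNReal.ofReal ((Fintype.card (Equiv.Perm (Fin m)) : ℝ) ^ (2 * n)) *
        volume {B : Fin m → Fin m → ℂ | Tfun m m B ≤ 1} := by
      rw [ha₁def, ← setLIntegral_const]
      exact setLIntegral_mono measurable_const fun B hB => wdet_bound hB
    refine (lt_of_le_of_lt hb ?_).ne
    exact ENNReal.mul_lt_top ENNReal.ofReal_lt_top
      ((measure_mono Tfun_le_subset_ball).trans_lt measure_closedBall_lt_top)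
  have ha₂ : a₂ ≠ ⊤ :=
    ((measure_mono Tfun_le_subset_ball).trans_lt measure_closedBall_lt_top).ne
  have ha₂0 : a₂ ≠ 0 := by
    have hopen : IsOpen {A : Fin m → Fin (m + n) → ℂ | Tfun m (m + n) A < 1} :=
      isOpen_lt Tfun_cont continuous_const
    have hmem : (0 : Fin m → Fin (m + n) → ℂ) ∈
        {A : Fin m → Fin (m + n) → ℂ | Tfun m (m + n) A < 1} := by
      simp [Tfun]
    have hsub : {A : Fin m → Fin (m + n) → ℂ | Tfun m (m + n) A < 1} ⊆
        {A : Fin m → Fin (m + n) → ℂ | Tfun m (m + n) A ≤ 1} := by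
      intro x hx
      simp only [Set.mem_setOf_eq] at hx ⊢
      exact le_of_lt hx
    exact (lt_of_lt_of_le (hopen.measure_pos volume ⟨0, hmem⟩) (measure_mono hsub)).ne'
  have hνeq : ν₁ = (a₁ / a₂) • ν₂ := aux_measure_eq ν₁ ν₂ a₁ a₂ _ h₁ h₂ ha₁ ha₂0 ha₂
  refine ⟨a₁ / a₂, (ENNReal.div_lt_top ha₁ ha₂0).ne, fun g hg => ?_⟩
  have e1 : ∫⁻ x, g x ∂ν₁ = ∫⁻ B : Fin m → Fin m → ℂ, wdet m n B * g (Tfun m m B) := by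
    rw [hν₁def, lintegral_map hg hTE]
    exact lintegral_withDensity_eq_lintegral_mul _ wdet_meas (hg.comp hTE)
  have e2 : ∫⁻ x, g x ∂ν₂ = ∫⁻ A : Fin m → Fin (m + n) → ℂ, g (Tfun m (m + n) A) :=
    lintegral_map hg hTF
  rw [← e1, hνeq, lintegral_smul_measure, e2, smul_eq_mul]

end key

/-- If `f₁, f₂` both normalize `A ↦ f(tr A A†)` to a probability density on complex
`m × (m+n)` matrices, then `∫ f_k(tr B B†)|det B|^{2n} dB` is finite and
independent of `k`. -/
theorem lemma_C_universal_complex (m n : ℕ) (hm : 1 ≤ m) (hn : 1 ≤ n)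
    (f₁ f₂ : ℝ → ℝ) (hf₁_meas : Measurable f₁) (hf₂_meas : Measurable f₂)
    (hf₁_nonneg : ∀ x, 0 ≤ f₁ x) (hf₂_nonneg : ∀ x, 0 ≤ f₂ x)
    (hprob₁ : IsProbabilityMeasure (volume.withDensity fun A : Fin m → Fin (m + n) → ℂ =>
      ENNReal.ofReal (f₁ (Matrix.trace (Matrix.of A * (Matrix.of A)ᴴ)).re)))
    (hprob₂ : IsProbabilityMeasure (volume.withDensity fun A : Fin m → Fin (m + n) → ℂ =>
      ENNReal.ofReal (f₂ (Matrix.trace (Matrix.of A * (Matrix.of A)ᴴ)).re))) :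
    (∫⁻ B : Fin m → Fin m → ℂ,
        ENNReal.ofReal (f₁ (Matrix.trace (Matrix.of B * (Matrix.of B)ᴴ)).re *
          ‖Matrix.det (Matrix.of B)‖ ^ (2 * n))) ≠ ⊤ ∧
    (∫⁻ B : Fin m → Fin m → ℂ,
        ENNReal.ofReal (f₁ (Matrix.trace (Matrix.of B * (Matrix.of B)ᴴ)).re *
          ‖Matrix.det (Matrix.of B)‖ ^ (2 * n)))
      = ∫⁻ B : Fin m → Fin m → ℂ,
          ENNReal.ofReal (f₂ (Matrix.trace (Matrix.of B * (Matrix.of B)ᴴ)).re *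
            ‖Matrix.det (Matrix.of B)‖ ^ (2 * n)) := by
  obtain ⟨C, hC, hkey⟩ := key_lemma m n hm hn
  have hint : ∀ f : ℝ → ℝ, Measurable f → (∀ x, 0 ≤ f x) →
      IsProbabilityMeasure (volume.withDensity fun A : Fin m → Fin (m + n) → ℂ =>
        ENNReal.ofReal (f (Matrix.trace (Matrix.of A * (Matrix.of A)ᴴ)).re)) →
      (∫⁻ B : Fin m → Fin m → ℂ,
        ENNReal.ofReal (f (Matrix.trace (Matrix.of B * (Matrix.of B)ᴴ)).re *
          ‖Matrix.det (Matrix.of B)‖ ^ (2 * n))) = C := by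
    intro f hf hfnn hprob
    have hg : Measurable fun x => ENNReal.ofReal (f x) := ENNReal.measurable_ofReal.comp hf
    have hnorm : (∫⁻ A : Fin m → Fin (m + n) → ℂ,
        ENNReal.ofReal (f (Tfun m (m + n) A))) = 1 := by
      have h := hprob.measure_univ
      rw [withDensity_apply _ MeasurableSet.univ, Measure.restrict_univ] at h
      simp only [trace_re_eq] at h
      exact h
    have hpt : ∀ B : Fin m → Fin m → ℂ,
        ENNReal.ofReal (f (Matrix.trace (Matrix.of B * (Matrix.of B)ᴴ)).re *
          ‖Matrix.det (Matrix.of B)‖ ^ (2 * n))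
        = wdet m n B * ENNReal.ofReal (f (Tfun m m B)) := by
      intro B
      rw [ENNReal.ofReal_mul (hfnn _), trace_re_eq, wdet, mul_comm]
    simp_rw [hpt]
    rw [hkey _ hg, hnorm, mul_one]
  have h1 := hint f₁ hf₁_meas hf₁_nonneg hprob₁
  have h2 := hint f₂ hf₂_meas hf₂_nonneg hprob₂
  rw [h1, h2]
  exact ⟨hC, rfl⟩
end

section
/- Let m ≥ 1 be an integer and β > 0. Let μ be the probability measure on ℝ^m with density z ↦ (Γ((m+1)/2)/π^((m+1)/2)) · β · (β² + zᵀz)^(−(m+1)/2) with respect to Lebesgue measure. Then for every index i (1 ≤ i ≤ m), the pushforward of μ under the coordinate map z ↦ z_i is the measure on ℝ with density ζ ↦ β/(π(β² + ζ²)), i.e., the Cauchy distribution of width β. -/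
open MeasureTheory
open scoped ENNReal Real

/-- Each coordinate of the `m`-dimensional spherical Cauchy-type distribution with
density `(Γ((m+1)/2)/π^((m+1)/2)) · β · (β² + zᵀz)^(−(m+1)/2)` follows a Cauchy
distribution of width `β`. -/
theorem coordinate_of_spherical_cauchy (m : ℕ) (hm : 1 ≤ m) (β : ℝ) (hβ : 0 < β)
    (μ : Measure (Fin m → ℝ))
    (hμ : μ = volume.withDensity fun z =>
      ENNReal.ofReal
        (Real.Gamma ((m + 1 : ℝ) / 2) / Real.pi ^ ((m + 1 : ℝ) / 2) * β *
          (β ^ 2 + ∑ k, z k ^ 2) ^ (-((m : ℝ) + 1) / 2)))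
    (hprob : IsProbabilityMeasure μ) (i : Fin m) :
    μ.map (fun z => z i)
      = volume.withDensity fun ζ : ℝ =>
          ENNReal.ofReal (β / (Real.pi * (β ^ 2 + ζ ^ 2))) := by
  classical
  obtain ⟨n, rfl⟩ : ∃ n, m = n + 1 := ⟨m - 1, (Nat.succ_pred_eq_of_pos hm).symm⟩
  set p : ℝ := -((↑(n + 1) : ℝ) + 1) / 2 with hp
  set C : ℝ := Real.Gamma (((↑(n + 1) : ℝ) + 1) / 2) /
      Real.pi ^ (((↑(n + 1) : ℝ) + 1) / 2) * β with hC
  have hC0 : 0 < C := by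
    apply mul_pos _ hβ
    apply div_pos (Real.Gamma_pos_of_pos (by positivity))
    positivity
  set K₀ : ℝ≥0∞ := ∫⁻ u : Fin n → ℝ, ENNReal.ofReal ((1 + ∑ k, u k ^ 2) ^ p) with hK₀
  -- scaling lemma
  have scaling : ∀ x : ℝ,
      (∫⁻ w : Fin n → ℝ, ENNReal.ofReal ((β ^ 2 + x ^ 2 + ∑ k, w k ^ 2) ^ p))
        = ENNReal.ofReal ((β ^ 2 + x ^ 2)⁻¹) * K₀ := by
    intro x
    set s : ℝ := β ^ 2 + x ^ 2 with hs
    have hs0 : 0 < s := by positivity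
    set a : ℝ := Real.sqrt s with ha
    have ha0 : 0 < a := Real.sqrt_pos.2 hs0
    have ha2 : a ^ 2 = s := Real.sq_sqrt hs0.le
    have hg : Measurable fun w : Fin n → ℝ => ENNReal.ofReal ((s + ∑ k, w k ^ 2) ^ p) := by
      fun_prop
    have hmap := Measure.map_addHaar_smul (volume : Measure (Fin n → ℝ)) (ne_of_gt ha0)
    have hfr : Module.finrank ℝ (Fin n → ℝ) = n := Module.finrank_fin_fun ℝ
    rw [hfr] at hmap
    have hsmul : Measurable fun u : Fin n → ℝ => a • u := measurable_id.const_smul a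
    have key := lintegral_map (μ := (volume : Measure (Fin n → ℝ))) hg hsmul
    rw [hmap, lintegral_smul_measure] at key
    -- key : ofReal |a^n|⁻¹ * ∫⁻ w, g w = ∫⁻ u, g (a • u)
    have hcomp : ∀ u : Fin n → ℝ,
        ENNReal.ofReal ((s + ∑ k, (a • u) k ^ 2) ^ p)
          = ENNReal.ofReal (s ^ p) * ENNReal.ofReal ((1 + ∑ k, u k ^ 2) ^ p) := by
      intro u
      have h1 : (s + ∑ k, (a • u) k ^ 2) = s * (1 + ∑ k, u k ^ 2) := by
        simp only [Pi.smul_apply, smul_eq_mul, mul_pow, ← Finset.mul_sum, ha2]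
        ring
      rw [h1, Real.mul_rpow hs0.le (by positivity),
        ENNReal.ofReal_mul (Real.rpow_nonneg hs0.le p)]
    simp only [hcomp] at key
    rw [lintegral_const_mul' _ _ ENNReal.ofReal_ne_top] at key
    -- now solve for the integral
    have habs : ENNReal.ofReal |(a ^ n)⁻¹| = (ENNReal.ofReal (a ^ n))⁻¹ := by
      rw [abs_of_pos (by positivity), ENNReal.ofReal_inv_of_pos (by positivity)]
    rw [habs] at key
    have hAne : ENNReal.ofReal (a ^ n) ≠ 0 := by
      simp [ENNReal.ofReal_eq_zero, not_le, pow_pos ha0 n]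
    have hAnt : ENNReal.ofReal (a ^ n) ≠ ⊤ := ENNReal.ofReal_ne_top
    have key2 : (∫⁻ w : Fin n → ℝ, ENNReal.ofReal ((s + ∑ k, w k ^ 2) ^ p))
        = ENNReal.ofReal (a ^ n) * (ENNReal.ofReal (s ^ p) * K₀) := by
      rw [← key, smul_eq_mul, ← mul_assoc, ENNReal.mul_inv_cancel hAne hAnt, one_mul]
    rw [key2, ← mul_assoc, ← ENNReal.ofReal_mul (by positivity)]
    congr 2
    have han : a ^ n = s ^ ((n : ℝ) / 2) := by
      rw [ha, Real.sqrt_eq_rpow, ← Real.rpow_natCast (s ^ ((1:ℝ)/2)) n,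
        ← Real.rpow_mul hs0.le]
      congr 1
      ring
    rw [han, ← Real.rpow_add hs0]
    have hexp : (n : ℝ) / 2 + p = -1 := by
      rw [hp]
      push_cast
      ring
    rw [hexp, Real.rpow_neg_one]
  -- density measurability
  have hd : Measurable fun z : Fin (n + 1) → ℝ =>
      ENNReal.ofReal (C * (β ^ 2 + ∑ k, z k ^ 2) ^ p) := by
    fun_prop
  -- the marginal formula
  have key : ∀ S : Set ℝ, MeasurableSet S →
      μ ((fun z : Fin (n + 1) → ℝ => z i) ⁻¹' S)
        = (ENNReal.ofReal C * K₀) * ∫⁻ x in S, ENNReal.ofReal ((β ^ 2 + x ^ 2)⁻¹) := by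
    intro S hS
    have hSpre : MeasurableSet ((fun z : Fin (n + 1) → ℝ => z i) ⁻¹' S) :=
      (measurable_pi_apply i) hS
    rw [hμ, withDensity_apply _ hSpre, ← lintegral_indicator hSpre _]
    have hind : Measurable (((fun z : Fin (n + 1) → ℝ => z i) ⁻¹' S).indicator
        fun z => ENNReal.ofReal (C * (β ^ 2 + ∑ k, z k ^ 2) ^ p)) := hd.indicator hSpre
    have hVP := (volume_preserving_piFinSuccAbove (fun _ : Fin (n + 1) => ℝ) i).symm
    rw [← hVP.lintegral_comp hind]
    have hcm : Measurable fun q : ℝ × (Fin n → ℝ) =>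
        (((fun z : Fin (n + 1) → ℝ => z i) ⁻¹' S).indicator
          (fun z => ENNReal.ofReal (C * (β ^ 2 + ∑ k, z k ^ 2) ^ p)))
          ((MeasurableEquiv.piFinSuccAbove (fun _ : Fin (n + 1) => ℝ) i).symm q) :=
      hind.comp (MeasurableEquiv.measurable _)
    rw [MeasureTheory.Measure.volume_eq_prod, lintegral_prod _ hcm.aemeasurable]
    have hpt : ∀ (x : ℝ) (w : Fin n → ℝ),
        (((fun z : Fin (n + 1) → ℝ => z i) ⁻¹' S).indicator
          (fun z => ENNReal.ofReal (C * (β ^ 2 + ∑ k, z k ^ 2) ^ p)))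
          ((MeasurableEquiv.piFinSuccAbove (fun _ : Fin (n + 1) => ℝ) i).symm (x, w))
        = S.indicator (fun t =>
            ENNReal.ofReal C * ENNReal.ofReal ((β ^ 2 + t ^ 2 + ∑ k, w k ^ 2) ^ p)) x := by
      intro x w
      have hins : (MeasurableEquiv.piFinSuccAbove (fun _ : Fin (n + 1) => ℝ) i).symm (x, w)
          = i.insertNth x w := rfl
      set z : Fin (n + 1) → ℝ := i.insertNth x w with hz
      have hsum : (∑ k, z k ^ 2) = x ^ 2 + ∑ j, w j ^ 2 := by
        have h := Fin.sum_univ_succAbove (fun k : Fin (n + 1) => z k ^ 2) i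
        simpa [hz, Fin.insertNth_apply_same, Fin.insertNth_apply_succAbove] using h
      have hzi : z i = x := by rw [hz, Fin.insertNth_apply_same]
      rw [hins, Set.indicator_apply, Set.indicator_apply]
      simp only [Set.mem_preimage, hzi, hsum]
      split_ifs with hx
      · rw [ENNReal.ofReal_mul hC0.le]
        ring_nf
      · rfl
    simp only [hpt]
    have hswap : ∀ x : ℝ,
        (∫⁻ w : Fin n → ℝ, S.indicator (fun t =>
            ENNReal.ofReal C * ENNReal.ofReal ((β ^ 2 + t ^ 2 + ∑ k, w k ^ 2) ^ p)) x)
          = S.indicator (fun t => (ENNReal.ofReal C * K₀) *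
              ENNReal.ofReal ((β ^ 2 + t ^ 2)⁻¹)) x := by
      intro x
      by_cases hx : x ∈ S
      · simp only [Set.indicator_of_mem hx]
        rw [lintegral_const_mul' _ _ ENNReal.ofReal_ne_top, scaling x]
        ring
      · simp [Set.indicator_of_notMem hx]
    simp only [hswap]
    have hf1 : Measurable fun x : ℝ => ENNReal.ofReal ((β ^ 2 + x ^ 2)⁻¹) := by
      apply Measurable.ennreal_ofReal
      exact (measurable_const.add (measurable_id.pow_const 2)).inv
    rw [lintegral_indicator hS _, lintegral_const_mul _ hf1]
  -- value of the one-dimensional lintegral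
  have hπ : (0 : ℝ) < Real.pi := Real.pi_pos
  have hint1 : Integrable fun x : ℝ => ((1 : ℝ) + (x / β) ^ 2)⁻¹ :=
    (MeasureTheory.integrable_comp_div_iff (fun y : ℝ => ((1 : ℝ) + y ^ 2)⁻¹)
      (ne_of_gt hβ)).2 integrable_inv_one_add_sq
  have heq1 : (fun x : ℝ => (β ^ 2 + x ^ 2)⁻¹)
      = fun x : ℝ => (β ^ 2)⁻¹ * ((1 : ℝ) + (x / β) ^ 2)⁻¹ := by
    funext x
    rw [← mul_inv]
    congr 1
    field_simp
  have hint : Integrable fun x : ℝ => (β ^ 2 + x ^ 2)⁻¹ := by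
    rw [heq1]; exact hint1.const_mul _
  have hval : ∫ x : ℝ, (β ^ 2 + x ^ 2)⁻¹ = Real.pi / β := by
    rw [heq1, integral_const_mul]
    have h2 : (∫ x : ℝ, ((1 : ℝ) + (x / β) ^ 2)⁻¹)
        = |β| • ∫ y : ℝ, ((1 : ℝ) + y ^ 2)⁻¹ :=
      MeasureTheory.Measure.integral_comp_div (fun y => ((1 : ℝ) + y ^ 2)⁻¹) β
    rw [h2, integral_univ_inv_one_add_sq, abs_of_pos hβ, smul_eq_mul]
    field_simp
  have hlin : (∫⁻ x : ℝ, ENNReal.ofReal ((β ^ 2 + x ^ 2)⁻¹))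
      = ENNReal.ofReal (Real.pi / β) := by
    rw [← MeasureTheory.ofReal_integral_eq_lintegral_ofReal hint
      (Filter.Eventually.of_forall fun x => by positivity), hval]
  -- total mass gives the constant
  have htot : (ENNReal.ofReal C * K₀) * ENNReal.ofReal (Real.pi / β) = 1 := by
    have h := key Set.univ MeasurableSet.univ
    rw [Set.preimage_univ, Measure.restrict_univ, hlin] at h
    rw [← h, measure_univ]
  have hπβ0 : (0 : ℝ) < Real.pi / β := by positivity
  have hne0 : ENNReal.ofReal (Real.pi / β) ≠ 0 := by
    simp [ENNReal.ofReal_eq_zero, not_le, hπβ0]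
  have hD : ENNReal.ofReal C * K₀ = ENNReal.ofReal (β / Real.pi) := by
    have h1 : ENNReal.ofReal C * K₀
        = (ENNReal.ofReal C * K₀ * ENNReal.ofReal (Real.pi / β))
            * (ENNReal.ofReal (Real.pi / β))⁻¹ := by
      rw [mul_assoc, ENNReal.mul_inv_cancel hne0 ENNReal.ofReal_ne_top, mul_one]
    rw [h1, htot, one_mul, ← ENNReal.ofReal_inv_of_pos hπβ0, inv_div]
  -- conclude
  refine Measure.ext fun S hS => ?_
  rw [Measure.map_apply (measurable_pi_apply i) hS, key S hS, hD,
    withDensity_apply _ hS]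
  have hf1 : Measurable fun x : ℝ => ENNReal.ofReal ((β ^ 2 + x ^ 2)⁻¹) := by
    apply Measurable.ennreal_ofReal
    exact (measurable_const.add (measurable_id.pow_const 2)).inv
  rw [← lintegral_const_mul _ hf1]
  refine lintegral_congr fun x => ?_
  rw [← ENNReal.ofReal_mul (by positivity)]
  congr 1
  rw [← div_eq_mul_inv, div_div]
end

section
/- Let m ≥ 2 be an integer and β > 0. Let μ be the probability measure on ℝ^m with density z ↦ (Γ((m+1)/2)/π^((m+1)/2)) · β · (β² + zᵀz)^(−(m+1)/2) with respect to Lebesgue measure. Then for any two distinct indices i ≠ j, the pushforward of μ under the (almost everywhere defined) map z ↦ z_i/z_j is the measure on ℝ with density r ↦ 1/(π(1 + r²)), i.e., the standard Cauchy distribution. In particular this law does not depend on β. -/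
open MeasureTheory
open scoped ENNReal Real

lemma lintegral_scale_eq (g : ℝ → ℝ≥0∞) (hg : Measurable g) {a : ℝ} (ha : a ≠ 0) :
    ∫⁻ x, g x = ENNReal.ofReal |a| * ∫⁻ x, g (a * x) := by
  have h1 : ∫⁻ x, g (a * x) ∂volume = ∫⁻ y, g y ∂(Measure.map (fun x => a * x) volume) :=
    (lintegral_map hg (measurable_const_mul a)).symm
  rw [h1, Real.map_volume_mul_left ha, lintegral_smul_measure, smul_eq_mul, ← mul_assoc,
    ← ENNReal.ofReal_mul (abs_nonneg a), abs_inv, mul_inv_cancel₀ (abs_ne_zero.2 ha),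
    ENNReal.ofReal_one, one_mul]

lemma prod_ratio {n : ℕ} {c : ℝ} (ee : ℝ) {q : (Fin n → ℝ) → ℝ}
    (hq : Measurable q) :
    ∃ K : ℝ≥0∞,
      ((volume : Measure (ℝ × ℝ × (Fin n → ℝ))).withDensity
          (fun p => ENNReal.ofReal (c * (q p.2.2 + p.2.1 ^ 2 + p.1 ^ 2) ^ ee))).map
          (fun p => p.1 / p.2.1)
        = volume.withDensity fun r : ℝ => K * ENNReal.ofReal ((1 + r ^ 2)⁻¹) := by
  classical
  set K : ℝ≥0∞ := ∫⁻ w : ℝ × (Fin n → ℝ), ENNReal.ofReal (c * |w.1| * (q w.2 + w.1 ^ 2) ^ ee)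
    with hK
  refine ⟨K, ?_⟩
  have hF : Measurable fun p : ℝ × ℝ × (Fin n → ℝ) => p.1 / p.2.1 :=
    measurable_fst.div (measurable_fst.comp measurable_snd)
  have hKmeas : Measurable fun w : ℝ × (Fin n → ℝ) =>
      ENNReal.ofReal (c * |w.1| * (q w.2 + w.1 ^ 2) ^ ee) := by fun_prop
  ext s hs
  have hind : Measurable (s.indicator fun _ : ℝ => (1 : ℝ≥0∞)) := measurable_const.indicator hs
  rw [Measure.map_apply hF hs, withDensity_apply _ (hF hs), withDensity_apply _ hs,
    ← lintegral_indicator hs]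
  have hdens : Measurable fun p : ℝ × ℝ × (Fin n → ℝ) =>
      ENNReal.ofReal (c * (q p.2.2 + p.2.1 ^ 2 + p.1 ^ 2) ^ ee) := by fun_prop
  have hsame : ∀ p : ℝ × ℝ × (Fin n → ℝ),
      ((fun p : ℝ × ℝ × (Fin n → ℝ) => p.1 / p.2.1) ⁻¹' s).indicator
        (fun p => ENNReal.ofReal (c * (q p.2.2 + p.2.1 ^ 2 + p.1 ^ 2) ^ ee)) p
      = s.indicator (fun _ => 1) (p.1 / p.2.1)
        * ENNReal.ofReal (c * (q p.2.2 + p.2.1 ^ 2 + p.1 ^ 2) ^ ee) := by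
    intro p
    by_cases hp : p.1 / p.2.1 ∈ s <;> simp [Set.indicator, hp]
  have hG : Measurable fun p : ℝ × ℝ × (Fin n → ℝ) =>
      s.indicator (fun _ => (1:ℝ≥0∞)) (p.1 / p.2.1)
        * ENNReal.ofReal (c * (q p.2.2 + p.2.1 ^ 2 + p.1 ^ 2) ^ ee) :=
    (hind.comp hF).mul hdens
  have hae : ∀ᵐ w : ℝ × (Fin n → ℝ) ∂(volume.prod volume), w.1 ≠ 0 := by
    have h0 : (volume.prod volume : Measure (ℝ × (Fin n → ℝ))) {w | w.1 = 0} = 0 := by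
      have hset : {w : ℝ × (Fin n → ℝ) | w.1 = 0} = ({(0:ℝ)} : Set ℝ) ×ˢ (Set.univ) :=
        Set.ext fun w => by
          simp only [Set.mem_setOf_eq, Set.mem_prod, Set.mem_singleton_iff, Set.mem_univ,
            and_true]
      rw [hset, Measure.prod_prod, Real.volume_singleton, zero_mul]
    exact (ae_iff.2 (by simpa using h0))
  have hinner : ∀ w : ℝ × (Fin n → ℝ), w.1 ≠ 0 →
      (∫⁻ x, s.indicator (fun _ => (1:ℝ≥0∞)) (x / w.1)
          * ENNReal.ofReal (c * (q w.2 + w.1 ^ 2 + x ^ 2) ^ ee))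
      = ∫⁻ r, s.indicator (fun _ => (1:ℝ≥0∞)) r
          * ENNReal.ofReal (c * |w.1| * (q w.2 + (1 + r ^ 2) * w.1 ^ 2) ^ ee) := by
    intro w hw
    have hg : Measurable fun x : ℝ => s.indicator (fun _ => (1:ℝ≥0∞)) (x / w.1)
        * ENNReal.ofReal (c * (q w.2 + w.1 ^ 2 + x ^ 2) ^ ee) :=
      (hind.comp (measurable_id.div_const _)).mul (by fun_prop)
    rw [lintegral_scale_eq _ hg hw, ← lintegral_const_mul _ (by
      exact (hind.comp ((measurable_const_mul w.1).div_const _)).mul (by fun_prop))]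
    refine lintegral_congr fun r => ?_
    rw [mul_div_cancel_left₀ _ hw, mul_left_comm]
    congr 1
    rw [← ENNReal.ofReal_mul (abs_nonneg _)]
    congr 1
    have hb : q w.2 + w.1 ^ 2 + (w.1 * r) ^ 2 = q w.2 + (1 + r ^ 2) * w.1 ^ 2 := by ring
    rw [hb]; ring
  have hH : AEMeasurable (Function.uncurry fun (w : ℝ × (Fin n → ℝ)) (r : ℝ) =>
      s.indicator (fun _ => (1:ℝ≥0∞)) r
        * ENNReal.ofReal (c * |w.1| * (q w.2 + (1 + r ^ 2) * w.1 ^ 2) ^ ee))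
      ((volume.prod volume).prod volume) := by
    apply Measurable.aemeasurable
    apply Measurable.mul
    · exact hind.comp measurable_snd
    · apply ENNReal.measurable_ofReal.comp
      exact (measurable_const.mul (measurable_fst.fst.abs)).mul
        (((hq.comp measurable_fst.snd).add
          ((measurable_const.add (measurable_snd.pow_const 2)).mul
            (measurable_fst.fst.pow_const 2))).pow_const ee)
  -- the key inner computation
  have hW : ∀ r : ℝ, (∫⁻ w : ℝ × (Fin n → ℝ),
        ENNReal.ofReal (c * |w.1| * (q w.2 + (1 + r ^ 2) * w.1 ^ 2) ^ ee)
        ∂(volume.prod volume))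
      = ENNReal.ofReal ((1 + r ^ 2)⁻¹) * K := by
    intro r
    have h1r : (0:ℝ) < 1 + r ^ 2 := by positivity
    have hWm : Measurable fun w : ℝ × (Fin n → ℝ) =>
        ENNReal.ofReal (c * |w.1| * (q w.2 + (1 + r ^ 2) * w.1 ^ 2) ^ ee) := by fun_prop
    have hyint : ∀ v : Fin n → ℝ,
        (∫⁻ y : ℝ, ENNReal.ofReal (c * |y| * (q v + (1 + r ^ 2) * y ^ 2) ^ ee))
        = ENNReal.ofReal ((1 + r ^ 2)⁻¹)
          * ∫⁻ u : ℝ, ENNReal.ofReal (c * |u| * (q v + u ^ 2) ^ ee) := by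
      intro v
      set s0 := Real.sqrt (1 + r ^ 2) with hs0def
      have hs0 : 0 < s0 := Real.sqrt_pos.2 h1r
      have hsq : s0 * s0 = 1 + r ^ 2 := Real.mul_self_sqrt h1r.le
      have hmg : Measurable fun y : ℝ =>
          ENNReal.ofReal (c * |y| * (q v + (1 + r ^ 2) * y ^ 2) ^ ee) := by fun_prop
      rw [lintegral_scale_eq _ hmg (inv_ne_zero hs0.ne')]
      have hpt : ∀ u : ℝ,
          ENNReal.ofReal (c * |s0⁻¹ * u| * (q v + (1 + r ^ 2) * (s0⁻¹ * u) ^ 2) ^ ee)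
          = ENNReal.ofReal s0⁻¹ * ENNReal.ofReal (c * |u| * (q v + u ^ 2) ^ ee) := by
        intro u
        have hinvsq : (s0⁻¹) ^ 2 = (1 + r ^ 2)⁻¹ := by rw [sq, ← mul_inv, hsq]
        have hkey : (1 + r ^ 2) * (s0⁻¹ * u) ^ 2 = u ^ 2 := by
          rw [mul_pow, hinvsq, ← mul_assoc, mul_inv_cancel₀ h1r.ne', one_mul]
        rw [hkey, abs_mul, abs_of_pos (inv_pos.2 hs0),
          ← ENNReal.ofReal_mul (inv_nonneg.2 hs0.le)]
        congr 1; ring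
      rw [lintegral_congr hpt, lintegral_const_mul _ (by fun_prop), ← mul_assoc,
        abs_of_pos (inv_pos.2 hs0), ← ENNReal.ofReal_mul (inv_nonneg.2 hs0.le), ← mul_inv, hsq]
    have hmeasv : Measurable fun v : Fin n → ℝ =>
        ∫⁻ u : ℝ, ENNReal.ofReal (c * |u| * (q v + u ^ 2) ^ ee) := by
      have : Measurable fun p : (Fin n → ℝ) × ℝ =>
          ENNReal.ofReal (c * |p.2| * (q p.1 + p.2 ^ 2) ^ ee) := by fun_prop
      exact this.lintegral_prod_right'
    calc (∫⁻ w : ℝ × (Fin n → ℝ),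
            ENNReal.ofReal (c * |w.1| * (q w.2 + (1 + r ^ 2) * w.1 ^ 2) ^ ee)
            ∂(volume.prod volume))
        = ∫⁻ v : Fin n → ℝ, ∫⁻ y : ℝ,
            ENNReal.ofReal (c * |y| * (q v + (1 + r ^ 2) * y ^ 2) ^ ee) :=
          lintegral_prod_symm _ hWm.aemeasurable
      _ = ∫⁻ v : Fin n → ℝ, ENNReal.ofReal ((1 + r ^ 2)⁻¹)
            * ∫⁻ u : ℝ, ENNReal.ofReal (c * |u| * (q v + u ^ 2) ^ ee) :=
          lintegral_congr fun v => hyint v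
      _ = ENNReal.ofReal ((1 + r ^ 2)⁻¹)
            * ∫⁻ v : Fin n → ℝ, ∫⁻ u : ℝ, ENNReal.ofReal (c * |u| * (q v + u ^ 2) ^ ee) :=
          lintegral_const_mul _ hmeasv
      _ = ENNReal.ofReal ((1 + r ^ 2)⁻¹) * K := by
          rw [hK, Measure.volume_eq_prod, lintegral_prod_symm _ hKmeas.aemeasurable]
  calc (∫⁻ p in (fun p : ℝ × ℝ × (Fin n → ℝ) => p.1 / p.2.1) ⁻¹' s,
          ENNReal.ofReal (c * (q p.2.2 + p.2.1 ^ 2 + p.1 ^ 2) ^ ee) ∂volume)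
      = ∫⁻ p : ℝ × ℝ × (Fin n → ℝ), s.indicator (fun _ => (1:ℝ≥0∞)) (p.1 / p.2.1)
          * ENNReal.ofReal (c * (q p.2.2 + p.2.1 ^ 2 + p.1 ^ 2) ^ ee) ∂volume := by
        rw [← lintegral_indicator (hF hs)]; exact lintegral_congr hsame
    _ = ∫⁻ w : ℝ × (Fin n → ℝ), ∫⁻ x : ℝ, s.indicator (fun _ => (1:ℝ≥0∞)) (x / w.1)
          * ENNReal.ofReal (c * (q w.2 + w.1 ^ 2 + x ^ 2) ^ ee) ∂volume
          ∂(volume.prod volume) := by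
        rw [Measure.volume_eq_prod]; exact lintegral_prod_symm _ hG.aemeasurable
    _ = ∫⁻ w : ℝ × (Fin n → ℝ), ∫⁻ r : ℝ, s.indicator (fun _ => (1:ℝ≥0∞)) r
          * ENNReal.ofReal (c * |w.1| * (q w.2 + (1 + r ^ 2) * w.1 ^ 2) ^ ee) ∂volume
          ∂(volume.prod volume) :=
        lintegral_congr_ae (hae.mono fun w hw => hinner w hw)
    _ = ∫⁻ r : ℝ, ∫⁻ w : ℝ × (Fin n → ℝ), s.indicator (fun _ => (1:ℝ≥0∞)) r
          * ENNReal.ofReal (c * |w.1| * (q w.2 + (1 + r ^ 2) * w.1 ^ 2) ^ ee)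
          ∂(volume.prod volume) ∂volume :=
        lintegral_lintegral_swap hH
    _ = ∫⁻ r : ℝ, s.indicator (fun _ => (1:ℝ≥0∞)) r
          * (ENNReal.ofReal ((1 + r ^ 2)⁻¹) * K) ∂volume := by
        refine lintegral_congr fun r => ?_
        rw [lintegral_const_mul _ (by fun_prop), hW r]
    _ = ∫⁻ r : ℝ, s.indicator (fun a : ℝ => K * ENNReal.ofReal ((1 + a ^ 2)⁻¹)) r ∂volume :=
        lintegral_congr fun r => by by_cases hr : r ∈ s <;> simp [hr, mul_comm]

lemma map_withDensity_mequiv {α β : Type*} [MeasurableSpace α] [MeasurableSpace β]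
    (ν : Measure α) (e : α ≃ᵐ β) (D : α → ℝ≥0∞) (hD : Measurable D) :
    (ν.withDensity D).map e = (ν.map e).withDensity (D ∘ e.symm) := by
  ext s hs
  rw [Measure.map_apply e.measurable hs, withDensity_apply _ (e.measurable hs),
    withDensity_apply _ hs,
    MeasureTheory.setLIntegral_map hs (hD.comp e.symm.measurable) e.measurable]
  simp

/-- The ratio `z_i / z_j` (`i ≠ j`) of coordinates of the `m`-dimensional spherical
Cauchy-type distribution with density
`(Γ((m+1)/2)/π^((m+1)/2)) · β · (β² + zᵀz)^(−(m+1)/2)` follows the standard Cauchy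
distribution, independently of `β`. -/
theorem ratio_of_spherical_cauchy (m : ℕ) (hm : 2 ≤ m) (β : ℝ) (hβ : 0 < β)
    (μ : Measure (Fin m → ℝ))
    (hμ : μ = volume.withDensity fun z =>
      ENNReal.ofReal
        (Real.Gamma ((m + 1 : ℝ) / 2) / Real.pi ^ ((m + 1 : ℝ) / 2) * β *
          (β ^ 2 + ∑ k, z k ^ 2) ^ (-((m : ℝ) + 1) / 2)))
    (hprob : IsProbabilityMeasure μ) (i j : Fin m) (hij : i ≠ j) :
    μ.map (fun z => z i / z j)
      = volume.withDensity fun r : ℝ =>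
          ENNReal.ofReal (1 / (Real.pi * (1 + r ^ 2))) := by
  obtain ⟨n, rfl⟩ : ∃ n, m = n + 2 := ⟨m - 2, by omega⟩
  subst hμ
  set c : ℝ := Real.Gamma ((↑(n+2) + 1 : ℝ) / 2) / Real.pi ^ ((↑(n+2) + 1 : ℝ) / 2) * β with hc
  set ee : ℝ := -((↑(n+2) : ℝ) + 1) / 2 with hee
  set D : (Fin (n+2) → ℝ) → ℝ≥0∞ :=
    fun z => ENNReal.ofReal (c * (β ^ 2 + ∑ k, z k ^ 2) ^ ee) with hD
  have hDmeas : Measurable D := by rw [hD]; fun_prop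
  -- a permutation sending i to 0 and j to 1
  obtain ⟨σ, hσi, hσj⟩ : ∃ σ : Equiv.Perm (Fin (n+2)), σ i = 0 ∧ σ j = 1 := by
    have h01 : (0 : Fin (n+2)) ≠ 1 := by simp [Fin.ext_iff]
    refine ⟨(Equiv.swap j ((Equiv.swap i (0 : Fin (n+2))).symm 1)).trans (Equiv.swap i 0),
      ?_, ?_⟩
    · have hic : i ≠ (Equiv.swap i (0 : Fin (n+2))).symm 1 := by
        intro h
        have h2 := congrArg (Equiv.swap i (0 : Fin (n+2))) h
        rw [Equiv.swap_apply_left, Equiv.apply_symm_apply] at h2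
        exact h01 h2
      rw [Equiv.trans_apply, Equiv.swap_apply_of_ne_of_ne hij hic, Equiv.swap_apply_left]
    · rw [Equiv.trans_apply, Equiv.swap_apply_left, Equiv.apply_symm_apply]
  set eσ : (Fin (n+2) → ℝ) ≃ᵐ (Fin (n+2) → ℝ) :=
    MeasurableEquiv.piCongrLeft (fun _ : Fin (n+2) => ℝ) σ with heσ
  have happ : ∀ (z : Fin (n+2) → ℝ) (k : Fin (n+2)), eσ z (σ k) = z k := by
    intro z k
    rw [heσ]
    exact MeasurableEquiv.piCongrLeft_apply_apply (β := fun _ : Fin (n+2) => ℝ) σ z k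
  have hfeq : (fun z : Fin (n+2) → ℝ => z i / z j)
      = (fun w : Fin (n+2) → ℝ => w 0 / w 1) ∘ ⇑eσ := by
    funext z
    simp only [Function.comp_apply]
    rw [← hσi, ← hσj, happ, happ]
  have hmapσ : ((volume : Measure (Fin (n+2) → ℝ)).withDensity D).map eσ
      = volume.withDensity D := by
    rw [map_withDensity_mequiv _ _ _ hDmeas,
      (volume_measurePreserving_piCongrLeft (fun _ : Fin (n+2) => ℝ) σ).map_eq]
    congr 1
    funext w
    have hsymm : ∀ k, eσ.symm w k = w (σ k) := fun k => by
      conv_rhs => rw [← eσ.apply_symm_apply w]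
      rw [happ]
    have hsum : ∑ k, eσ.symm w k ^ 2 = ∑ k, w k ^ 2 := by
      calc ∑ k, eσ.symm w k ^ 2 = ∑ k, w (σ k) ^ 2 :=
            Finset.sum_congr rfl fun k _ => by rw [hsymm]
        _ = ∑ k, w k ^ 2 := Equiv.sum_comp σ (fun b => w b ^ 2)
    simp only [Function.comp_apply, hD, hsum]
  -- split off the first two coordinates
  set e1 : (Fin (n+2) → ℝ) ≃ᵐ ℝ × (Fin (n+1) → ℝ) :=
    MeasurableEquiv.piFinSuccAbove (fun _ : Fin (n+2) => ℝ) 0 with he1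
  set e2 : (Fin (n+1) → ℝ) ≃ᵐ ℝ × (Fin n → ℝ) :=
    MeasurableEquiv.piFinSuccAbove (fun _ : Fin (n+1) => ℝ) 0 with he2
  set E2 : (Fin (n+2) → ℝ) ≃ᵐ ℝ × ℝ × (Fin n → ℝ) :=
    e1.trans ((MeasurableEquiv.refl ℝ).prodCongr e2) with hE2
  have hE2z : ∀ z : Fin (n+2) → ℝ,
      E2 z = (z 0, z 1, fun k : Fin n => z k.succ.succ) := by
    intro z
    rw [hE2, he1, he2]
    simp [MeasurableEquiv.trans_apply, MeasurableEquiv.piFinSuccAbove,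
      MeasurableEquiv.prodCongr, Fin.removeNth, Fin.succAbove_zero, Fin.succ_zero_eq_one,
      Equiv.prodCongr, Fin.insertNthEquiv]
    constructor
    · simp [Fin.tail, Fin.succ_zero_eq_one]
    · rfl
  have hE2mp : MeasurePreserving (⇑E2) volume volume := by
    have hmp1 := volume_preserving_piFinSuccAbove (fun _ : Fin (n+2) => ℝ) 0
    have hmp2 := volume_preserving_piFinSuccAbove (fun _ : Fin (n+1) => ℝ) 0
    have hmp2' : MeasurePreserving (Prod.map (id : ℝ → ℝ) ⇑e2)
        (volume : Measure (ℝ × (Fin (n+1) → ℝ))) (volume : Measure (ℝ × ℝ × (Fin n → ℝ))) := by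
      have h := (MeasurePreserving.id (volume : Measure ℝ)).prod hmp2
      rwa [← Measure.volume_eq_prod, ← Measure.volume_eq_prod] at h
    have hcomp : ⇑E2 = (Prod.map (id : ℝ → ℝ) ⇑e2) ∘ ⇑e1 := rfl
    rw [hcomp]
    exact hmp2'.comp hmp1
  have hsplit : (fun w : Fin (n+2) → ℝ => w 0 / w 1)
      = (fun p : ℝ × ℝ × (Fin n → ℝ) => p.1 / p.2.1) ∘ ⇑E2 := by
    funext w
    simp only [Function.comp_apply, hE2z w]
  have hmap2 : ((volume : Measure (Fin (n+2) → ℝ)).withDensity D).map E2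
      = volume.withDensity (fun p : ℝ × ℝ × (Fin n → ℝ) =>
          ENNReal.ofReal (c * ((β ^ 2 + ∑ k, p.2.2 k ^ 2) + p.2.1 ^ 2 + p.1 ^ 2) ^ ee)) := by
    rw [map_withDensity_mequiv _ _ _ hDmeas, hE2mp.map_eq]
    congr 1
    funext p
    have hDz : ∀ z : Fin (n+2) → ℝ,
        D z = ENNReal.ofReal (c * ((β ^ 2 + ∑ k : Fin n, (E2 z).2.2 k ^ 2)
          + (E2 z).2.1 ^ 2 + (E2 z).1 ^ 2) ^ ee) := by
      intro z
      rw [hE2z z]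
      simp only [hD]
      have hsum : ∑ k : Fin (n+2), z k ^ 2
          = z 0 ^ 2 + (z 1 ^ 2 + ∑ k : Fin n, z k.succ.succ ^ 2) := by
        rw [Fin.sum_univ_succ (f := fun k : Fin (n+2) => z k ^ 2),
          Fin.sum_univ_succ (f := fun k : Fin (n+1) => z k.succ ^ 2)]
        simp [Fin.succ_zero_eq_one]
      rw [hsum]
      congr 2
      ring
    rw [Function.comp_apply, hDz (E2.symm p), MeasurableEquiv.apply_symm_apply]
  -- apply the product-space computation
  obtain ⟨K, hKeq⟩ := prod_ratio (n := n) (c := c) ee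
    (q := fun v : Fin n → ℝ => β ^ 2 + ∑ k, v k ^ 2) (by fun_prop)
  have hFm : Measurable fun p : ℝ × ℝ × (Fin n → ℝ) => p.1 / p.2.1 :=
    measurable_fst.div (measurable_fst.comp measurable_snd)
  have hg0m : Measurable fun w : Fin (n+2) → ℝ => w 0 / w 1 :=
    (measurable_pi_apply 0).div (measurable_pi_apply 1)
  have hmain : ((volume : Measure (Fin (n+2) → ℝ)).withDensity D).map (fun z => z i / z j)
      = volume.withDensity fun r : ℝ => K * ENNReal.ofReal ((1 + r ^ 2)⁻¹) := by
    calc ((volume : Measure (Fin (n+2) → ℝ)).withDensity D).map (fun z => z i / z j)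
        = (((volume : Measure (Fin (n+2) → ℝ)).withDensity D).map eσ).map
            (fun w : Fin (n+2) → ℝ => w 0 / w 1) := by
          rw [hfeq, ← Measure.map_map hg0m eσ.measurable]
      _ = ((volume : Measure (Fin (n+2) → ℝ)).withDensity D).map
            (fun w : Fin (n+2) → ℝ => w 0 / w 1) := by rw [hmapσ]
      _ = (((volume : Measure (Fin (n+2) → ℝ)).withDensity D).map E2).map
            (fun p : ℝ × ℝ × (Fin n → ℝ) => p.1 / p.2.1) := by
          rw [hsplit, ← Measure.map_map hFm E2.measurable]
      _ = volume.withDensity fun r : ℝ => K * ENNReal.ofReal ((1 + r ^ 2)⁻¹) := by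
          rw [hmap2]; exact hKeq
  -- use the fact that μ is a probability measure to identify K
  have hfm : Measurable fun z : Fin (n+2) → ℝ => z i / z j :=
    (measurable_pi_apply i).div (measurable_pi_apply j)
  have htot : K * ENNReal.ofReal π = 1 := by
    have h1 := congrArg (fun ν : Measure ℝ => ν Set.univ) hmain
    rw [Measure.map_apply hfm MeasurableSet.univ, Set.preimage_univ] at h1
    have : (volume.withDensity D) Set.univ = 1 := hprob.measure_univ
    rw [this] at h1
    rw [withDensity_apply _ MeasurableSet.univ, Measure.restrict_univ,
      lintegral_const_mul _ (by fun_prop)] at h1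
    have hlint : ∫⁻ r : ℝ, ENNReal.ofReal ((1 + r ^ 2)⁻¹) = ENNReal.ofReal π := by
      rw [← integral_univ_inv_one_add_sq]
      exact (ofReal_integral_eq_lintegral_ofReal integrable_inv_one_add_sq
        (Filter.Eventually.of_forall fun x => by positivity)).symm
    rw [hlint] at h1
    exact h1.symm
  have hKval : K = ENNReal.ofReal π⁻¹ := by
    have hπ0 : ENNReal.ofReal π ≠ 0 := (ENNReal.ofReal_pos.2 Real.pi_pos).ne'
    have hπt : ENNReal.ofReal π ≠ ⊤ := ENNReal.ofReal_ne_top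
    have h2 : K = 1 * (ENNReal.ofReal π)⁻¹ := by
      rw [← htot, mul_assoc, ENNReal.mul_inv_cancel hπ0 hπt, mul_one]
    rw [h2, one_mul, ← ENNReal.ofReal_inv_of_pos Real.pi_pos]
  rw [hmain, hKval]
  congr 1
  funext r
  rw [← ENNReal.ofReal_mul (by positivity)]
  congr 1
  rw [one_div, mul_inv]
end

section
/- Let m ≥ 1 and n ≥ 1 be integers and let f : ℝ → ℝ be a measurable nonnegative function. For z ∈ ℝ^m and u ∈ ℝⁿ, let ξ = (z; u) ∈ ℝ^{m+n} denote the concatenated vector, and define P(z, u) = ∫ f(tr(Aᵀ A) + (Aξ)ᵀ(Aξ)) · |det B| dA, the integral over all real m×(m+n) matrices A with Lebesgue measure, where B is the m×m matrix formed by the first m columns of A. Then for every orthogonal matrix O₁ ∈ O(m) and every orthogonal matrix O₂ ∈ O(n), P(O₁ z, O₂ u) = P(z, u). -/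
open MeasureTheory Matrix
open scoped ENNReal Real

/-- Orthogonal invariance of
`P(z, u) = ∫ f(tr Aᵀ A + (Aξ)ᵀ(Aξ)) |det B| dA`, `ξ = (z; u)`:
`P(O₁ z, O₂ u) = P(z, u)` for all `O₁ ∈ O(m)`, `O₂ ∈ O(n)`. -/
theorem P_orthogonal_invariance (m n : ℕ) (hm : 1 ≤ m) (hn : 1 ≤ n)
    (f : ℝ → ℝ) (hf_meas : Measurable f) (hf_nonneg : ∀ x, 0 ≤ f x)
    (P : (Fin m → ℝ) → (Fin n → ℝ) → ℝ≥0∞)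
    (hP : ∀ (z : Fin m → ℝ) (u : Fin n → ℝ),
      P z u = ∫⁻ A : Fin m → Fin (m + n) → ℝ,
        ENNReal.ofReal
          (f (Matrix.trace ((Matrix.of A)ᵀ * Matrix.of A) +
              ∑ i, (Matrix.of A *ᵥ Fin.append z u) i ^ 2) *
            |Matrix.det ((Matrix.of A).submatrix id (Fin.castAdd n))|))
    (O₁ : Matrix (Fin m) (Fin m) ℝ) (hO₁ : O₁ ∈ Matrix.orthogonalGroup (Fin m) ℝ)
    (O₂ : Matrix (Fin n) (Fin n) ℝ) (hO₂ : O₂ ∈ Matrix.orthogonalGroup (Fin n) ℝ)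
    (z : Fin m → ℝ) (u : Fin n → ℝ) :
    P (O₁ *ᵥ z) (O₂ *ᵥ u) = P z u := by
  classical
  have hO₁' : O₁ᵀ * O₁ = 1 := by
    have := (Matrix.mem_unitaryGroup_iff'.mp hO₁); simpa [Matrix.star_eq_conjTranspose] using this
  have hO₂' : O₂ᵀ * O₂ = 1 := by
    have := (Matrix.mem_unitaryGroup_iff'.mp hO₂); simpa [Matrix.star_eq_conjTranspose] using this
  have hdet₁ : |O₁.det| = 1 := by
    have h : O₁.det * O₁.det = 1 := by
      have := congrArg Matrix.det hO₁'
      simpa [Matrix.det_mul, Matrix.det_transpose] using this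
    rcases mul_self_eq_one_iff.mp h with h1 | h1 <;> simp [h1]
  have hdet₂ : |O₂.det| = 1 := by
    have h : O₂.det * O₂.det = 1 := by
      have := congrArg Matrix.det hO₂'
      simpa [Matrix.det_mul, Matrix.det_transpose] using this
    rcases mul_self_eq_one_iff.mp h with h1 | h1 <;> simp [h1]
  set e : Fin m ⊕ Fin n ≃ Fin (m + n) := finSumFinEquiv
  set Q : Matrix (Fin (m + n)) (Fin (m + n)) ℝ :=
    (Matrix.fromBlocks O₁ 0 0 O₂).submatrix e.symm e.symm with hQdef
  have hQQt : Q * Qᵀ = 1 := by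
    rw [hQdef, Matrix.transpose_submatrix, Matrix.fromBlocks_transpose,
      Matrix.submatrix_mul_equiv, Matrix.fromBlocks_multiply]
    have h1 : O₁ * O₁ᵀ = 1 := mul_eq_one_comm.mp hO₁'
    have h2 : O₂ * O₂ᵀ = 1 := mul_eq_one_comm.mp hO₂'
    simp [Matrix.transpose_zero, h1, h2, Matrix.fromBlocks_one,
      Matrix.submatrix_one_equiv]
  have hQtQ : Qᵀ * Q = 1 := mul_eq_one_comm.mp hQQt
  have hdetQ : |Q.det| = 1 := by
    have : Q.det = O₁.det * O₂.det := by
      rw [hQdef, Matrix.det_submatrix_equiv_self, Matrix.det_fromBlocks_zero₁₂]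
    rw [this, abs_mul, hdet₁, hdet₂, mul_one]
  -- the change of variables `A ↦ A * Q`, i.e. rowwise `v ↦ Qᵀ *ᵥ v`
  have hrow : MeasurePreserving (fun v : Fin (m + n) → ℝ => Qᵀ *ᵥ v) volume volume := by
    have hd : (Qᵀ).det ≠ 0 := by
      rw [Matrix.det_transpose]
      intro h; rw [h] at hdetQ; norm_num at hdetQ
    refine ⟨?_, ?_⟩
    · exact (Matrix.toLin' Qᵀ).continuous_of_finiteDimensional.measurable
    · have := Real.map_matrix_volume_pi_eq_smul_volume_pi (M := Qᵀ) hd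
      have habs : |(Qᵀ).det⁻¹| = 1 := by
        rw [abs_inv, Matrix.det_transpose, hdetQ]; norm_num
      rw [habs] at this
      rw [show (fun v : Fin (m + n) → ℝ => Qᵀ *ᵥ v) = ⇑(Matrix.toLin' Qᵀ) from
        funext fun v => (Matrix.toLin'_apply _ _).symm]
      simpa using this
  have hT : MeasurePreserving
      (fun (A : Fin m → Fin (m + n) → ℝ) (i : Fin m) => Qᵀ *ᵥ A i) volume volume :=
    volume_preserving_pi (fun _ => hrow)
  -- pairing `Q` with the appended vectors
  have happ : Fin.append z u = Sum.elim z u ∘ e.symm := by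
    funext i
    induction i using Fin.addCases with
    | left i => simp [e, Fin.append_left]
    | right i => simp [e, Fin.append_right]
  have hξ : Q *ᵥ Fin.append z u = Fin.append (O₁ *ᵥ z) (O₂ *ᵥ u) := by
    funext i
    have h1 : Fin.append (O₁ *ᵥ z) (O₂ *ᵥ u) = Sum.elim (O₁ *ᵥ z) (O₂ *ᵥ u) ∘ e.symm := by
      funext j
      induction j using Fin.addCases with
      | left j => simp [e, Fin.append_left]
      | right j => simp [e, Fin.append_right]
    rw [hQdef, happ, h1]
    have := Matrix.submatrix_mulVec_equiv (Matrix.fromBlocks O₁ 0 0 O₂)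
      (Sum.elim z u ∘ e.symm) e.symm e.symm
    have hcomp : (Sum.elim z u ∘ e.symm) ∘ (e.symm).symm = Sum.elim z u := by
      funext j; simp
    rw [hcomp] at this
    rw [this]
    simp [Matrix.fromBlocks_mulVec]
  -- the integrand
  set g : (Fin m → Fin (m + n) → ℝ) → ℝ≥0∞ := fun A =>
    ENNReal.ofReal
      (f (Matrix.trace ((Matrix.of A)ᵀ * Matrix.of A) +
          ∑ i, (Matrix.of A *ᵥ Fin.append z u) i ^ 2) *
        |Matrix.det ((Matrix.of A).submatrix id (Fin.castAdd n))|) with hgdef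
  have hofA : Continuous (fun A : Fin m → Fin (m + n) → ℝ => Matrix.of A) := by
    apply continuous_matrix
    intro i j
    exact (continuous_apply j).comp (continuous_apply i)
  have hg_meas : Measurable g := by
    apply ENNReal.measurable_ofReal.comp
    apply Measurable.mul
    · apply hf_meas.comp
      apply Continuous.measurable
      apply Continuous.add
      · exact (hofA.matrix_transpose.matrix_mul hofA).matrix_trace
      · apply continuous_finset_sum
        intro i _
        exact ((continuous_apply i).comp (hofA.matrix_mulVec continuous_const)).pow 2
    · apply Continuous.measurable
      exact ((hofA.matrix_submatrix id (Fin.castAdd n)).matrix_det).abs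
  -- key matrix identities
  have hsub : ∀ A : Matrix (Fin m) (Fin (m + n)) ℝ,
      (A * Q).submatrix id (Fin.castAdd n) = A.submatrix id (Fin.castAdd n) * O₁ := by
    intro A
    ext i j
    simp only [Matrix.submatrix_apply, Matrix.mul_apply, id_eq]
    rw [← Fintype.sum_equiv e
      (fun s => A i (e s) * Q (e s) (Fin.castAdd n j))
      (fun k => A i k * Q k (Fin.castAdd n j)) (fun s => rfl)]
    simp [Fintype.sum_sum_type, hQdef, e]
  have hkey : ∀ A : Fin m → Fin (m + n) → ℝ,
      ENNReal.ofReal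
          (f (Matrix.trace ((Matrix.of A)ᵀ * Matrix.of A) +
              ∑ i, (Matrix.of A *ᵥ Fin.append (O₁ *ᵥ z) (O₂ *ᵥ u)) i ^ 2) *
            |Matrix.det ((Matrix.of A).submatrix id (Fin.castAdd n))|)
        = g (fun i => Qᵀ *ᵥ A i) := by
    intro A
    have hofT : (Matrix.of fun i => Qᵀ *ᵥ A i) = Matrix.of A * Q := by
      ext i j
      simp [Matrix.mul_apply, Matrix.mulVec, dotProduct, mul_comm]
    rw [hgdef]
    dsimp only
    rw [hofT]
    have htr : Matrix.trace ((Matrix.of A * Q)ᵀ * (Matrix.of A * Q))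
        = Matrix.trace ((Matrix.of A)ᵀ * Matrix.of A) := by
      rw [Matrix.transpose_mul, Matrix.mul_assoc]
      rw [Matrix.trace_mul_comm]
      simp only [← Matrix.mul_assoc]
      rw [Matrix.mul_assoc ((Matrix.of A)ᵀ * Matrix.of A) Q Qᵀ, hQQt, Matrix.mul_one]
    have hmv : (Matrix.of A * Q) *ᵥ Fin.append z u
        = Matrix.of A *ᵥ Fin.append (O₁ *ᵥ z) (O₂ *ᵥ u) := by
      rw [← Matrix.mulVec_mulVec, hξ]
    rw [htr, hmv, hsub, Matrix.det_mul, abs_mul, hdet₁, mul_one]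
  rw [hP, hP]
  calc (∫⁻ A : Fin m → Fin (m + n) → ℝ,
        ENNReal.ofReal
          (f (Matrix.trace ((Matrix.of A)ᵀ * Matrix.of A) +
              ∑ i, (Matrix.of A *ᵥ Fin.append (O₁ *ᵥ z) (O₂ *ᵥ u)) i ^ 2) *
            |Matrix.det ((Matrix.of A).submatrix id (Fin.castAdd n))|))
      = ∫⁻ A : Fin m → Fin (m + n) → ℝ, g (fun i => Qᵀ *ᵥ A i) := by
        exact lintegral_congr fun A => hkey A
    _ = ∫⁻ A : Fin m → Fin (m + n) → ℝ, g A := hT.lintegral_comp hg_meas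
end

section
/- Let f : ℝ → ℝ be a measurable nonnegative function such that the measure on ℝ² with density (x, y) ↦ f(x² + y²) with respect to Lebesgue measure is a probability measure (equivalently, ∫₀^∞ f(u) du = 1/π). Then the pushforward, under the (almost everywhere defined) map (x, y) ↦ x/y, of the probability measure with density (x, y) ↦ f(x² + y²) is the measure on ℝ with density z ↦ 1/(π(1 + z²)), i.e., the standard Cauchy distribution, independently of the choice of f. -/
open MeasureTheory
open scoped ENNReal Real

private lemma lint_scale (g : ℝ → ℝ≥0∞) (hg : Measurable g) {a : ℝ} (ha : a ≠ 0) :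
    ∫⁻ x, g x = ENNReal.ofReal |a| * ∫⁻ z, g (a * z) := by
  have h1 : ∫⁻ z, g (a * z) = ∫⁻ x, g x ∂(Measure.map (a * ·) volume) :=
    (lintegral_map hg (measurable_const_mul a)).symm
  rw [h1, Real.map_volume_mul_left ha, lintegral_smul_measure, smul_eq_mul, ← mul_assoc,
    ← ENNReal.ofReal_mul (abs_nonneg a), ← abs_mul, mul_inv_cancel₀ ha, abs_one,
    ENNReal.ofReal_one, one_mul]

private lemma key_ratio (f : ℝ → ℝ) (hf : Measurable f)
    (φ : ℝ → ℝ≥0∞) (hφ : Measurable φ) :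
    ∫⁻ p : ℝ × ℝ, φ (p.1 / p.2) * ENNReal.ofReal (f (p.1 ^ 2 + p.2 ^ 2)) =
      (∫⁻ u : ℝ, ENNReal.ofReal |u| * ENNReal.ofReal (f (u ^ 2))) *
        ∫⁻ z : ℝ, φ z * (ENNReal.ofReal (1 + z ^ 2))⁻¹ := by
  set c : ℝ≥0∞ := ∫⁻ u : ℝ, ENNReal.ofReal |u| * ENNReal.ofReal (f (u ^ 2)) with hc
  have hF : Measurable fun p : ℝ × ℝ =>
      φ (p.1 / p.2) * ENNReal.ofReal (f (p.1 ^ 2 + p.2 ^ 2)) :=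
    (hφ.comp (measurable_fst.div measurable_snd)).mul
      ((hf.comp ((measurable_fst.pow_const 2).add (measurable_snd.pow_const 2))).ennreal_ofReal)
  have hG : Measurable fun p : ℝ × ℝ =>
      ENNReal.ofReal |p.1| * (φ p.2 * ENNReal.ofReal (f ((1 + p.2 ^ 2) * p.1 ^ 2))) :=
    (measurable_fst.abs.ennreal_ofReal).mul
      ((hφ.comp measurable_snd).mul
        ((hf.comp (((measurable_const.add (measurable_snd.pow_const 2)).mul
          (measurable_fst.pow_const 2)))).ennreal_ofReal))
  have hinner : ∀ z : ℝ, Measurable fun y : ℝ =>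
      ENNReal.ofReal |y| * ENNReal.ofReal (f ((1 + z ^ 2) * y ^ 2)) := fun z =>
    (measurable_abs.ennreal_ofReal).mul
      ((hf.comp ((measurable_id.pow_const 2).const_mul (1 + z ^ 2))).ennreal_ofReal)
  have hae : ∀ᵐ y : ℝ, y ≠ 0 := by
    refine (ae_iff.2 ?_); simpa using measure_singleton (0 : ℝ)
  calc
    ∫⁻ p : ℝ × ℝ, φ (p.1 / p.2) * ENNReal.ofReal (f (p.1 ^ 2 + p.2 ^ 2))
        = ∫⁻ y : ℝ, ∫⁻ x : ℝ, φ (x / y) * ENNReal.ofReal (f (x ^ 2 + y ^ 2)) := by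
          rw [Measure.volume_eq_prod, lintegral_prod_symm _ hF.aemeasurable]
    _ = ∫⁻ y : ℝ, ∫⁻ z : ℝ,
          ENNReal.ofReal |y| * (φ z * ENNReal.ofReal (f ((1 + z ^ 2) * y ^ 2))) := by
          refine lintegral_congr_ae (hae.mono fun y hy => ?_)
          have h0 : ∫⁻ x : ℝ, φ (x / y) * ENNReal.ofReal (f (x ^ 2 + y ^ 2)) =
              ENNReal.ofReal |y| *
                ∫⁻ z : ℝ, φ (y * z / y) * ENNReal.ofReal (f ((y * z) ^ 2 + y ^ 2)) :=
            lint_scale (fun x => φ (x / y) * ENNReal.ofReal (f (x ^ 2 + y ^ 2)))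
              ((hφ.comp (measurable_id.div_const y)).mul
                ((hf.comp ((measurable_id.pow_const 2).add_const (y ^ 2))).ennreal_ofReal)) hy
          show ∫⁻ x : ℝ, φ (x / y) * ENNReal.ofReal (f (x ^ 2 + y ^ 2)) = _
          rw [h0, ← lintegral_const_mul' _ _ ENNReal.ofReal_ne_top]
          refine lintegral_congr fun z => ?_
          have h1 : y * z / y = z := by field_simp
          have h2 : (y * z) ^ 2 + y ^ 2 = (1 + z ^ 2) * y ^ 2 := by ring
          rw [h1, h2]
    _ = ∫⁻ z : ℝ, ∫⁻ y : ℝ,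
          ENNReal.ofReal |y| * (φ z * ENNReal.ofReal (f ((1 + z ^ 2) * y ^ 2))) := by
          exact lintegral_lintegral_swap hG.aemeasurable
    _ = ∫⁻ z : ℝ, φ z * (c * (ENNReal.ofReal (1 + z ^ 2))⁻¹) := by
          refine lintegral_congr fun z => ?_
          have hpos : (0 : ℝ) < 1 + z ^ 2 := by positivity
          have hIz : ENNReal.ofReal (1 + z ^ 2) *
              (∫⁻ y : ℝ, ENNReal.ofReal |y| * ENNReal.ofReal (f ((1 + z ^ 2) * y ^ 2))) = c := by
            set s : ℝ := Real.sqrt (1 + z ^ 2) with hs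
            have hspos : 0 < s := Real.sqrt_pos.2 hpos
            have hs2 : s ^ 2 = 1 + z ^ 2 := Real.sq_sqrt hpos.le
            have h := lint_scale (fun u => ENNReal.ofReal |u| * ENNReal.ofReal (f (u ^ 2)))
              ((measurable_abs.ennreal_ofReal).mul
                ((hf.comp (measurable_id.pow_const 2)).ennreal_ofReal)) hspos.ne'
            have heq : ∀ y : ℝ, ENNReal.ofReal |s * y| * ENNReal.ofReal (f ((s * y) ^ 2)) =
                ENNReal.ofReal s *
                  (ENNReal.ofReal |y| * ENNReal.ofReal (f ((1 + z ^ 2) * y ^ 2))) := by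
              intro y
              have h3 : (s * y) ^ 2 = (1 + z ^ 2) * y ^ 2 := by rw [mul_pow, hs2]
              rw [h3, abs_mul, abs_of_pos hspos, ENNReal.ofReal_mul hspos.le, mul_assoc]
            simp only [heq] at h
            rw [lintegral_const_mul _ (hinner z)] at h
            rw [← hs2, ← Real.sqrt_sq hspos.le, hs2] at h
            -- h : c = ofReal |s| * (ofReal s * ∫ ...)
            rw [hc, h, abs_of_pos hspos, ← mul_assoc, ← ENNReal.ofReal_mul hspos.le, ← sq, hs2]
          rw [show (∫⁻ y : ℝ, ENNReal.ofReal |y| *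
              (φ z * ENNReal.ofReal (f ((1 + z ^ 2) * y ^ 2)))) =
              ∫⁻ y : ℝ, φ z * (ENNReal.ofReal |y| *
                ENNReal.ofReal (f ((1 + z ^ 2) * y ^ 2))) from
            lintegral_congr fun y => by ring,
            lintegral_const_mul _ (hinner z)]
          have hb0 : ENNReal.ofReal (1 + z ^ 2) ≠ 0 := by
            simp [ENNReal.ofReal_eq_zero, not_le, hpos]
          have hbt : ENNReal.ofReal (1 + z ^ 2) ≠ ∞ := ENNReal.ofReal_ne_top
          have : (∫⁻ y : ℝ, ENNReal.ofReal |y| * ENNReal.ofReal (f ((1 + z ^ 2) * y ^ 2))) =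
              (ENNReal.ofReal (1 + z ^ 2))⁻¹ * c := by
            rw [← hIz, ← mul_assoc, ENNReal.inv_mul_cancel hb0 hbt, one_mul]
          rw [this]
          ring
    _ = c * ∫⁻ z : ℝ, φ z * (ENNReal.ofReal (1 + z ^ 2))⁻¹ := by
          have hm : Measurable fun z : ℝ => φ z * (ENNReal.ofReal (1 + z ^ 2))⁻¹ := by
            fun_prop
          rw [← lintegral_const_mul c hm]
          refine lintegral_congr fun z => ?_
          ring

/-- **Universality of the Cauchy distribution for ratios.** If `(x, y)` has
probability density `f(x² + y²)` on `ℝ²`, then `z = x/y` follows the standard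
Cauchy distribution, independently of `f`. -/
theorem universality_ratio_cauchy (f : ℝ → ℝ)
    (hf_meas : Measurable f) (hf_nonneg : ∀ x, 0 ≤ f x)
    (μ : Measure (ℝ × ℝ))
    (hμ : μ = volume.withDensity fun p => ENNReal.ofReal (f (p.1 ^ 2 + p.2 ^ 2)))
    (hprob : IsProbabilityMeasure μ) :
    μ.map (fun p : ℝ × ℝ => p.1 / p.2)
      = volume.withDensity fun z : ℝ =>
          ENNReal.ofReal (1 / (Real.pi * (1 + z ^ 2))) := by
  set c : ℝ≥0∞ := ∫⁻ u : ℝ, ENNReal.ofReal |u| * ENNReal.ofReal (f (u ^ 2)) with hc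
  have hFmeas : Measurable fun p : ℝ × ℝ => ENNReal.ofReal (f (p.1 ^ 2 + p.2 ^ 2)) :=
    (hf_meas.comp ((measurable_fst.pow_const 2).add (measurable_snd.pow_const 2))).ennreal_ofReal
  have hπ : ∫⁻ z : ℝ, (ENNReal.ofReal (1 + z ^ 2))⁻¹ = ENNReal.ofReal π := by
    have h1 : ∀ z : ℝ, (ENNReal.ofReal (1 + z ^ 2))⁻¹ = ENNReal.ofReal ((1 + z ^ 2)⁻¹) :=
      fun z => (ENNReal.ofReal_inv_of_pos (by positivity)).symm
    simp_rw [h1]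
    rw [← ofReal_integral_eq_lintegral_ofReal integrable_inv_one_add_sq
      (Filter.Eventually.of_forall fun z => by positivity), integral_univ_inv_one_add_sq]
  have htotal : c * ENNReal.ofReal π = 1 := by
    have h1 : μ Set.univ = 1 := hprob.measure_univ
    rw [hμ, withDensity_apply _ MeasurableSet.univ, Measure.restrict_univ] at h1
    have h2 := key_ratio f hf_meas (fun _ => 1) measurable_const
    simp only [one_mul] at h2
    rw [h1, hπ] at h2
    exact h2.symm
  have hπ0 : ENNReal.ofReal π ≠ 0 := by
    simp [ENNReal.ofReal_eq_zero, not_le, Real.pi_pos]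
  have hcval : c = (ENNReal.ofReal π)⁻¹ := by
    have := congrArg (· * (ENNReal.ofReal π)⁻¹) htotal
    simpa [mul_assoc, ENNReal.mul_inv_cancel hπ0 ENNReal.ofReal_ne_top] using this
  ext s hs
  rw [Measure.map_apply (show Measurable fun p : ℝ × ℝ => p.1 / p.2 from measurable_fst.div measurable_snd) hs, hμ,
    withDensity_apply _ ((show Measurable fun p : ℝ × ℝ => p.1 / p.2 from measurable_fst.div measurable_snd) hs),
    withDensity_apply _ hs,
    ← lintegral_indicator ((show Measurable fun p : ℝ × ℝ => p.1 / p.2 from measurable_fst.div measurable_snd) hs),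
    ← lintegral_indicator hs]
  have hind : ∀ p : ℝ × ℝ,
      ((fun p : ℝ × ℝ => p.1 / p.2) ⁻¹' s).indicator
        (fun p : ℝ × ℝ => ENNReal.ofReal (f (p.1 ^ 2 + p.2 ^ 2))) p =
      s.indicator (fun _ => (1 : ℝ≥0∞)) (p.1 / p.2) *
        ENNReal.ofReal (f (p.1 ^ 2 + p.2 ^ 2)) := by
    intro p
    by_cases h : p.1 / p.2 ∈ s <;> simp [Set.indicator_apply, h]
  simp_rw [hind]
  rw [key_ratio f hf_meas (s.indicator fun _ => (1 : ℝ≥0∞)) (measurable_const.indicator hs), ← hc, hcval,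
    ← lintegral_const_mul _ (show Measurable fun z : ℝ => s.indicator (fun _ => (1 : ℝ≥0∞)) z *
      (ENNReal.ofReal (1 + z ^ 2))⁻¹ from (measurable_const.indicator hs).mul
      (show Measurable fun z : ℝ => (ENNReal.ofReal (1 + z ^ 2))⁻¹ by fun_prop))]
  refine lintegral_congr fun z => ?_
  by_cases h : z ∈ s
  · have hpos : (0 : ℝ) < 1 + z ^ 2 := by positivity
    rw [Set.indicator_of_mem h, Set.indicator_of_mem h, one_mul, one_div,
      ENNReal.ofReal_inv_of_pos (by positivity : (0 : ℝ) < π * (1 + z ^ 2)),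
      ENNReal.ofReal_mul Real.pi_pos.le,
      ENNReal.mul_inv (Or.inl hπ0) (Or.inl ENNReal.ofReal_ne_top)]
  · simp [Set.indicator_of_notMem h]
end
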